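/- arXiv:2307.10466 — 4 statements merged into one kernel-verified Lean document; each statement's English description precedes it below -/
import Mathlib

section
/- Let μ be a distribution on binom([n],k) and let P = U_{1→k} D_{k→1} be the 1 ↔ k up-down walk for μ. Then the second-largest eigenvalue of P equals λ_max(Ψ_μ)/k, where Ψ_μ is the correlation matrix of μ. -/
open Finset BigOperators

noncomputable section

def kSets (n k : ℕ) : Finset (Finset (Fin n)) := Finset.univ.powersetCard k

def margin {n : ℕ} (μ : Finset (Fin n) → ℝ) (k : ℕ) (i : Fin n) : ℝ :=
  ∑ S ∈ kSets n k, if i ∈ S then μ S else 0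

def pairProb {n : ℕ} (μ : Finset (Fin n) → ℝ) (k : ℕ) (i j : Fin n) : ℝ :=
  ∑ S ∈ kSets n k, if i ∈ S ∧ j ∈ S then μ S else 0

def condProb {n : ℕ} (μ : Finset (Fin n) → ℝ) (k : ℕ) (i j : Fin n) : ℝ :=
  pairProb μ k i j / margin μ k i

/-- The correlation matrix `Ψ_μ`. -/
def corrMatrix {n : ℕ} (μ : Finset (Fin n) → ℝ) (k : ℕ) : Matrix (Fin n) (Fin n) ℝ :=
  fun i j => if i = j then 1 - margin μ k i else condProb μ k i j - margin μ k j

/-- The largest eigenvalue of a matrix. -/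
def lambdaMax {n : ℕ} (M : Matrix (Fin n) (Fin n) ℝ) : ℝ :=
  sSup {t : ℝ | Module.End.HasEigenvalue (Matrix.toLin' M) t}

/-- Transition matrix of the `1 ↔ k` up-down walk `U_{1→k} D_{k→1}`:
from `i`, pick `S ∋ i` with probability `μ(S)/P_μ[i ∈ S]`, then a uniform element of `S`. -/
def upDown {n : ℕ} (μ : Finset (Fin n) → ℝ) (k : ℕ) : Matrix (Fin n) (Fin n) ℝ :=
  fun i j => ∑ S ∈ kSets n k,
    (if i ∈ S then μ S / margin μ k i else 0) * (if j ∈ S then 1 / (k : ℝ) else 0)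

/-- The stationary distribution `μ D_{k→1}` of the `1 ↔ k` up-down walk. -/
def statDist {n : ℕ} (μ : Finset (Fin n) → ℝ) (k : ℕ) (i : Fin n) : ℝ :=
  margin μ k i / k

/-- The second-largest eigenvalue of the reversible walk `P = U_{1→k} D_{k→1}`, via the
variational (Rayleigh quotient) characterization over functions orthogonal to constants
in `L²(π)`, `π = μ D_{k→1}`. -/
def lambdaTwo {n : ℕ} (μ : Finset (Fin n) → ℝ) (k : ℕ) : ℝ :=
  sSup {t : ℝ | ∃ v : Fin n → ℝ, v ≠ 0 ∧ (∑ i, statDist μ k i * v i) = 0 ∧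
    t = (∑ i, statDist μ k i * v i * ((upDown μ k).mulVec v i)) /
        (∑ i, statDist μ k i * (v i) ^ 2)}

/-!
Write `π = statDist μ k` and `P = upDown μ k`. Since `π i * P i j = pairProb μ k i j / k ^ 2`,
the walk is reversible, and `Ψ_μ = k • (P - 𝟙 πᵀ)`. Conjugating `P - 𝟙 πᵀ` by `diag (√π)` gives a
symmetric matrix `N` with the same spectrum which kills `√π`, and the Rayleigh quotient of `P` in
`L²(π)` at `v ⊥ 𝟙` is the ordinary Rayleigh quotient of `N` at `√π ⊙ v`. So it is at most
`λ_max(N)`, and when `λ_max(N) > 0` the top eigenvector of `N` is orthogonal to `√π` and attains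
it. Otherwise `λ_max(N) = 0`, and the supremum is `0` as well because `P` is positive
semidefinite on `L²(π)`: `⟨v, P v⟩_π = ∑_S μ S (∑_{i ∈ S} v i)² / k²`.
-/

open Matrix Pointwise

lemma lambdaMax_eq_sSup_spectrum {n : ℕ} (M : Matrix (Fin n) (Fin n) ℝ) :
    lambdaMax M = sSup (spectrum ℝ M) := by
  simp only [lambdaMax, Module.End.hasEigenvalue_iff_mem_spectrum, Matrix.spectrum_toLin']
  rfl

lemma le_lambdaMax_of_mem_spectrum {n : ℕ} {M : Matrix (Fin n) (Fin n) ℝ} {t : ℝ}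
    (ht : t ∈ spectrum ℝ M) : t ≤ lambdaMax M := by
  rw [lambdaMax_eq_sSup_spectrum]
  exact le_csSup (M.finite_spectrum.bddAbove) ht

lemma lambdaMax_mul_mul_of_mul_eq_one {n : ℕ} (M U V : Matrix (Fin n) (Fin n) ℝ)
    (hUV : U * V = 1) (hVU : V * U = 1) : lambdaMax (U * M * V) = lambdaMax M := by
  simp only [lambdaMax_eq_sSup_spectrum]
  exact congrArg sSup (spectrum.units_conjugate (u := ⟨U, V, hUV, hVU⟩))

lemma lambdaMax_smul {n : ℕ} (M : Matrix (Fin n) (Fin n) ℝ) {c : ℝ} (hc : 0 < c) :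
    lambdaMax (c • M) = c * lambdaMax M := by
  simp only [lambdaMax_eq_sSup_spectrum]
  have h := spectrum.unit_smul_eq_smul (R := ℝ) M (Units.mk0 c hc.ne')
  rw [Units.smul_def, Units.smul_def, Units.val_mk0] at h
  rw [h, Real.sSup_smul_of_nonneg hc.le, smul_eq_mul]

namespace Matrix.IsHermitian

variable {n : ℕ} {A : Matrix (Fin n) (Fin n) ℝ} (hA : A.IsHermitian)
include hA

lemma lambdaMax_mem_spectrum [NeZero n] : lambdaMax A ∈ spectrum ℝ A := by
  rw [lambdaMax_eq_sSup_spectrum]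
  refine Set.Nonempty.csSup_mem ?_ A.finite_spectrum
  rw [hA.spectrum_real_eq_range_eigenvalues]
  exact Set.range_nonempty _

lemma dotProduct_mulVec_le_lambdaMax_mul (x : Fin n → ℝ) :
    x ⬝ᵥ A *ᵥ x ≤ lambdaMax A * (x ⬝ᵥ x) := by
  have hpsd : (algebraMap ℝ _ (lambdaMax A) - A).PosSemidef := by
    refine posSemidef_iff_isHermitian_and_spectrum_nonneg.2 ⟨?_, ?_⟩
    · exact (isHermitian_diagonal_of_self_adjoint _ (IsSelfAdjoint.all _)).sub hA
    · rw [← spectrum.singleton_sub_eq]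
      rintro _ ⟨_, rfl, t, ht, rfl⟩
      exact sub_nonneg.2 (le_lambdaMax_of_mem_spectrum ht)
  simpa [sub_mulVec, Algebra.algebraMap_eq_smul_one, smul_mulVec, dotProduct_sub] using
    hpsd.dotProduct_mulVec_nonneg x

end Matrix.IsHermitian

lemma Matrix.mem_spectrum_iff_exists_mulVec_eq_smul {ι K : Type*} [Fintype ι] [DecidableEq ι]
    [Field K] (A : Matrix ι ι K) (t : K) :
    t ∈ spectrum K A ↔ ∃ w ≠ 0, A *ᵥ w = t • w := by
  rw [← Matrix.spectrum_toLin', ← Module.End.hasEigenvalue_iff_mem_spectrum]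
  constructor
  · intro h
    obtain ⟨w, hw, hw0⟩ := h.exists_hasEigenvector
    exact ⟨w, hw0, by simpa using Module.End.mem_eigenspace_iff.1 hw⟩
  · rintro ⟨w, hw0, hw⟩
    exact Module.End.hasEigenvalue_of_hasEigenvector
      ⟨Module.End.mem_eigenspace_iff.2 (by simpa using hw), hw0⟩

section diagConj

variable {n : ℕ} {d : Fin n → ℝ}

def diagConj (d : Fin n → ℝ) (M : Matrix (Fin n) (Fin n) ℝ) : Matrix (Fin n) (Fin n) ℝ :=
  diagonal d * M * diagonal d⁻¹

lemma diagConj_apply (M : Matrix (Fin n) (Fin n) ℝ) (i j : Fin n) :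
    diagConj d M i j = d i * M i j / d j := by
  simp [diagConj, diagonal_mul, mul_diagonal, div_eq_mul_inv]

lemma isHermitian_diagConj {M : Matrix (Fin n) (Fin n) ℝ} (hd : ∀ i, d i ≠ 0)
    (hM : ∀ i j, d i ^ 2 * M i j = d j ^ 2 * M j i) : (diagConj d M).IsHermitian := by
  ext i j
  rw [conjTranspose_apply, star_trivial, diagConj_apply, diagConj_apply,
    div_eq_div_iff (hd i) (hd j)]
  linear_combination hM j i

lemma diagConj_mulVec_diagonal_mulVec (hd : ∀ i, d i ≠ 0) (M : Matrix (Fin n) (Fin n) ℝ)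
    (v : Fin n → ℝ) : diagConj d M *ᵥ (diagonal d *ᵥ v) = diagonal d *ᵥ (M *ᵥ v) := by
  have hdd : diagonal d⁻¹ * diagonal d = 1 := by simp [diagonal_mul_diagonal, hd]
  rw [diagConj, mulVec_mulVec, Matrix.mul_assoc, hdd, Matrix.mul_one, ← mulVec_mulVec]

lemma lambdaMax_diagConj (hd : ∀ i, d i ≠ 0) (M : Matrix (Fin n) (Fin n) ℝ) :
    lambdaMax (diagConj d M) = lambdaMax M :=
  lambdaMax_mul_mul_of_mul_eq_one M _ _ (by simp [diagonal_mul_diagonal, hd])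
    (by simp [diagonal_mul_diagonal, hd])

end diagConj

def rayleighQuotientSet {n : ℕ} (π : Fin n → ℝ) (P : Matrix (Fin n) (Fin n) ℝ) : Set ℝ :=
  {t | ∃ v : Fin n → ℝ, v ≠ 0 ∧ (∑ i, π i * v i) = 0 ∧
    t = (∑ i, π i * v i * (P *ᵥ v) i) / (∑ i, π i * v i ^ 2)}

section reversible

variable {n : ℕ} {π : Fin n → ℝ} {P : Matrix (Fin n) (Fin n) ℝ}

lemma sqrt_comp_ne_zero (hπ : ∀ i, 0 < π i) (i : Fin n) : (Real.sqrt ∘ π) i ≠ 0 :=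
  (Real.sqrt_pos.2 (hπ i)).ne'

lemma dotProduct_diagonal_sqrt_mulVec (hπ : ∀ i, 0 ≤ π i) (v w : Fin n → ℝ) :
    (diagonal (Real.sqrt ∘ π) *ᵥ v) ⬝ᵥ (diagonal (Real.sqrt ∘ π) *ᵥ w) =
      ∑ i, π i * v i * w i := by
  refine Finset.sum_congr rfl fun i _ => ?_
  rw [mulVec_diagonal, mulVec_diagonal, Function.comp_apply, mul_mul_mul_comm,
    Real.mul_self_sqrt (hπ i), mul_assoc]

lemma sum_mul_sq_pos (hπ : ∀ i, 0 < π i) {v : Fin n → ℝ} (hv0 : v ≠ 0) :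
    0 < ∑ i, π i * v i ^ 2 := by
  obtain ⟨i, hi⟩ := Function.ne_iff.1 hv0
  exact Finset.sum_pos' (fun j _ => by have := hπ j; positivity)
    ⟨i, Finset.mem_univ i, mul_pos (hπ i) (pow_two_pos_of_ne_zero hi)⟩

lemma sub_vecMulVec_mulVec_of_sum_eq_zero {v : Fin n → ℝ} (hv : ∑ i, π i * v i = 0) :
    (P - vecMulVec 1 π) *ᵥ v = P *ᵥ v := by
  rw [sub_mulVec, vecMulVec_mulVec]
  simp [dotProduct, hv]

lemma sum_mul_sq_eq_dotProduct (hπ : ∀ i, 0 ≤ π i) (v : Fin n → ℝ) :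
    ∑ i, π i * v i ^ 2 =
      (diagonal (Real.sqrt ∘ π) *ᵥ v) ⬝ᵥ (diagonal (Real.sqrt ∘ π) *ᵥ v) := by
  simp only [dotProduct_diagonal_sqrt_mulVec hπ, sq, mul_assoc]

lemma sum_mul_mulVec_eq_dotProduct_diagConj (hπ : ∀ i, 0 < π i) {v : Fin n → ℝ}
    (hv : ∑ i, π i * v i = 0) :
    ∑ i, π i * v i * (P *ᵥ v) i = (diagonal (Real.sqrt ∘ π) *ᵥ v) ⬝ᵥ
      (diagConj (Real.sqrt ∘ π) (P - vecMulVec 1 π) *ᵥ diagonal (Real.sqrt ∘ π) *ᵥ v) := by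
  rw [diagConj_mulVec_diagonal_mulVec (sqrt_comp_ne_zero hπ),
    dotProduct_diagonal_sqrt_mulVec (fun i => (hπ i).le), sub_vecMulVec_mulVec_of_sum_eq_zero hv]

lemma diagConj_sqrt_sub_vecMulVec_mulVec_sqrt (hπ : ∀ i, 0 < π i) (hπsum : ∑ i, π i = 1)
    (hP1 : P *ᵥ 1 = 1) :
    diagConj (Real.sqrt ∘ π) (P - vecMulVec 1 π) *ᵥ (Real.sqrt ∘ π) = 0 := by
  have hsqrt : diagonal (Real.sqrt ∘ π) *ᵥ 1 = Real.sqrt ∘ π := by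
    ext i
    rw [mulVec_diagonal, Pi.one_apply, mul_one]
  nth_rw 2 [← hsqrt]
  rw [diagConj_mulVec_diagonal_mulVec (sqrt_comp_ne_zero hπ), sub_mulVec, hP1, vecMulVec_mulVec,
    dotProduct_one, hπsum, MulOpposite.op_one, one_smul, sub_self, mulVec_zero]

lemma lambdaMax_sub_vecMulVec_nonneg (hπ : ∀ i, 0 < π i) (hπsum : ∑ i, π i = 1)
    (hP1 : P *ᵥ 1 = 1) : 0 ≤ lambdaMax (P - vecMulVec 1 π) := by
  obtain ⟨i, -⟩ := Finset.exists_ne_zero_of_sum_ne_zero (hπsum ▸ one_ne_zero)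
  rw [← lambdaMax_diagConj (sqrt_comp_ne_zero hπ)]
  refine le_lambdaMax_of_mem_spectrum ((mem_spectrum_iff_exists_mulVec_eq_smul _ _).2
    ⟨_, Function.ne_iff.2 ⟨i, sqrt_comp_ne_zero hπ i⟩, ?_⟩)
  rw [diagConj_sqrt_sub_vecMulVec_mulVec_sqrt hπ hπsum hP1, zero_smul]

variable (hπ : ∀ i, 0 < π i) (hrev : ∀ i j, π i * P i j = π j * P j i)
include hπ hrev

lemma isHermitian_diagConj_sqrt_sub_vecMulVec :
    (diagConj (Real.sqrt ∘ π) (P - vecMulVec 1 π)).IsHermitian := by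
  refine isHermitian_diagConj (sqrt_comp_ne_zero hπ) fun i j => ?_
  simp only [Function.comp_apply, Real.sq_sqrt (hπ _).le, Matrix.sub_apply, vecMulVec_apply,
    Pi.one_apply]
  linear_combination hrev i j

lemma rayleighQuotient_le_lambdaMax {v : Fin n → ℝ} (hv0 : v ≠ 0)
    (hv : ∑ i, π i * v i = 0) :
    (∑ i, π i * v i * (P *ᵥ v) i) / (∑ i, π i * v i ^ 2) ≤
      lambdaMax (P - vecMulVec 1 π) := by
  rw [div_le_iff₀ (sum_mul_sq_pos hπ hv0), sum_mul_mulVec_eq_dotProduct_diagConj hπ hv,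
    sum_mul_sq_eq_dotProduct (fun i => (hπ i).le),
    ← lambdaMax_diagConj (sqrt_comp_ne_zero hπ)]
  exact (isHermitian_diagConj_sqrt_sub_vecMulVec hπ hrev).dotProduct_mulVec_le_lambdaMax_mul _

variable (hπsum : ∑ i, π i = 1) (hP1 : P *ᵥ 1 = 1)
include hπsum hP1

lemma lambdaMax_mem_rayleighQuotientSet (hpos : 0 < lambdaMax (P - vecMulVec 1 π)) :
    lambdaMax (P - vecMulVec 1 π) ∈ rayleighQuotientSet π P := by
  set s := Real.sqrt ∘ π
  set N := diagConj s (P - vecMulVec 1 π)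
  have hs : ∀ i, s i ≠ 0 := sqrt_comp_ne_zero hπ
  have hN : N.IsHermitian := isHermitian_diagConj_sqrt_sub_vecMulVec hπ hrev
  have : NeZero n := ⟨by rintro rfl; simp at hπsum⟩
  obtain ⟨w, hw0, hw⟩ := (mem_spectrum_iff_exists_mulVec_eq_smul _ _).1
    (lambdaMax_diagConj hs (P - vecMulVec 1 π) ▸ hN.lambdaMax_mem_spectrum)
  -- `N` is symmetric and kills `s`, so an eigenvector for a nonzero eigenvalue is orthogonal to `s`
  have horth : s ⬝ᵥ w = 0 := by
    have : lambdaMax (P - vecMulVec 1 π) * (s ⬝ᵥ w) = 0 := by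
      rw [← smul_eq_mul, ← dotProduct_smul, ← hw, dotProduct_mulVec, ← mulVec_transpose,
        ← conjTranspose_eq_transpose_of_trivial, hN.eq,
        diagConj_sqrt_sub_vecMulVec_mulVec_sqrt hπ hπsum hP1, zero_dotProduct]
    exact (mul_eq_zero.1 this).resolve_left hpos.ne'
  set v := diagonal s⁻¹ *ᵥ w
  have hwv : diagonal s *ᵥ v = w := by
    ext i
    simp only [v, mulVec_diagonal, Pi.inv_apply, mul_inv_cancel_left₀ (hs i)]
  have hv : ∑ i, π i * v i = 0 := by
    rw [← horth, ← hwv]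
    refine Finset.sum_congr rfl fun i _ => ?_
    rw [mulVec_diagonal, ← mul_assoc, show s i * s i = π i from Real.mul_self_sqrt (hπ i).le]
  have hv0 : v ≠ 0 := by
    rintro h
    exact hw0 (by rw [← hwv, h, mulVec_zero])
  refine ⟨v, hv0, hv, ?_⟩
  rw [eq_div_iff (sum_mul_sq_pos hπ hv0).ne', sum_mul_mulVec_eq_dotProduct_diagConj hπ hv,
    sum_mul_sq_eq_dotProduct (fun i => (hπ i).le), hwv, hw, dotProduct_smul, smul_eq_mul]

theorem sSup_rayleighQuotientSet_eq_lambdaMax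
    (hpsd : ∀ v, 0 ≤ ∑ i, π i * v i * (P *ᵥ v) i) :
    sSup (rayleighQuotientSet π P) = lambdaMax (P - vecMulVec 1 π) := by
  have hle : ∀ t ∈ rayleighQuotientSet π P, t ≤ lambdaMax (P - vecMulVec 1 π) := by
    rintro _ ⟨v, hv0, hv, rfl⟩
    exact rayleighQuotient_le_lambdaMax hπ hrev hv0 hv
  -- the set is empty when `n = 1`, and then `sSup ∅ = 0`: hence the bound `0 ≤ lambdaMax`
  refine le_antisymm (Real.sSup_le hle (lambdaMax_sub_vecMulVec_nonneg hπ hπsum hP1)) ?_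
  rcases le_or_gt (lambdaMax (P - vecMulVec 1 π)) 0 with hnonpos | hpos
  · refine hnonpos.trans (Real.sSup_nonneg ?_)
    rintro _ ⟨v, hv0, -, rfl⟩
    exact div_nonneg (hpsd v) (sum_mul_sq_pos hπ hv0).le
  · exact le_csSup ⟨_, hle⟩ (lambdaMax_mem_rayleighQuotientSet hπ hrev hπsum hP1 hpos)

end reversible

section upDown

variable {n k : ℕ} {μ : Finset (Fin n) → ℝ}

lemma card_eq_of_mem_kSets {S : Finset (Fin n)} (hS : S ∈ kSets n k) : S.card = k :=
  (Finset.mem_powersetCard.1 hS).2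

lemma pairProb_comm (i j : Fin n) : pairProb μ k i j = pairProb μ k j i :=
  Finset.sum_congr rfl fun S _ => by simp only [and_comm]

lemma pairProb_self (i : Fin n) : pairProb μ k i i = margin μ k i :=
  Finset.sum_congr rfl fun S _ => by simp only [and_self]

lemma sum_pairProb (i : Fin n) : ∑ j, pairProb μ k i j = k * margin μ k i := by
  simp only [pairProb, margin, ite_and]
  rw [Finset.sum_comm, Finset.mul_sum]
  refine Finset.sum_congr rfl fun S hS => ?_
  split_ifs
  · rw [Finset.sum_ite_mem, Finset.univ_inter, Finset.sum_const, card_eq_of_mem_kSets hS,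
      nsmul_eq_mul]
  · simp

lemma sum_margin (hsum : ∑ S ∈ kSets n k, μ S = 1) : ∑ i, margin μ k i = k := by
  simp only [margin]
  rw [Finset.sum_comm, ← mul_one (k : ℝ), ← hsum, Finset.mul_sum]
  refine Finset.sum_congr rfl fun S hS => ?_
  rw [Finset.sum_ite_mem, Finset.univ_inter, Finset.sum_const, card_eq_of_mem_kSets hS,
    nsmul_eq_mul]

lemma upDown_apply (i j : Fin n) :
    upDown μ k i j = pairProb μ k i j / (margin μ k i * k) := by
  simp only [upDown, pairProb, Finset.sum_div]
  refine Finset.sum_congr rfl fun S _ => ?_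
  split_ifs <;> simp_all [← div_eq_mul_inv, div_div]

lemma statDist_mul_upDown {i : Fin n} (hmarg : margin μ k i ≠ 0) (j : Fin n) :
    statDist μ k i * upDown μ k i j = pairProb μ k i j / k ^ 2 := by
  rw [statDist, upDown_apply]
  field_simp

lemma sum_statDist_mul_upDown_mulVec (hmarg : ∀ i, margin μ k i ≠ 0) (v : Fin n → ℝ) :
    ∑ i, statDist μ k i * v i * (upDown μ k *ᵥ v) i =
      (∑ S ∈ kSets n k, μ S * (∑ i ∈ S, v i) ^ 2) / k ^ 2 := by
  have hpair : ∀ i j, statDist μ k i * v i * (upDown μ k i j * v j) =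
      (∑ S ∈ kSets n k, μ S * ((if i ∈ S then v i else 0) * (if j ∈ S then v j else 0))) /
        k ^ 2 := by
    intro i j
    rw [mul_mul_mul_comm, statDist_mul_upDown (hmarg i), div_mul_eq_mul_div, pairProb,
      Finset.sum_mul]
    congr 1
    refine Finset.sum_congr rfl fun S _ => ?_
    split_ifs <;> simp_all
  simp only [mulVec, dotProduct, Finset.mul_sum, hpair, ← Finset.sum_div]
  have hsq : ∀ S : Finset (Fin n), (∑ i ∈ S, v i) ^ 2 =
      ∑ i, ∑ j, (if i ∈ S then v i else 0) * (if j ∈ S then v j else 0) := by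
    intro S
    rw [← Finset.sum_mul_sum, Finset.sum_ite_mem, Finset.univ_inter, sq]
  simp only [hsq, Finset.mul_sum]
  congr 1
  symm
  rw [Finset.sum_comm]
  exact Finset.sum_congr rfl fun i _ => Finset.sum_comm

lemma statDist_mul_upDown_comm (hmarg : ∀ i, margin μ k i ≠ 0) (i j : Fin n) :
    statDist μ k i * upDown μ k i j = statDist μ k j * upDown μ k j i := by
  rw [statDist_mul_upDown (hmarg i), statDist_mul_upDown (hmarg j), pairProb_comm]

lemma sum_statDist_mul_upDown_mulVec_nonneg (hnonneg : ∀ S, 0 ≤ μ S)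
    (hmarg : ∀ i, margin μ k i ≠ 0) (v : Fin n → ℝ) :
    0 ≤ ∑ i, statDist μ k i * v i * (upDown μ k *ᵥ v) i := by
  rw [sum_statDist_mul_upDown_mulVec hmarg]
  exact div_nonneg (Finset.sum_nonneg fun S _ => mul_nonneg (hnonneg S) (sq_nonneg _))
    (sq_nonneg _)

lemma statDist_pos (hk : 0 < k) (hmarg : ∀ i, 0 < margin μ k i) (i : Fin n) :
    0 < statDist μ k i :=
  div_pos (hmarg i) (Nat.cast_pos.2 hk)

lemma sum_statDist (hk : k ≠ 0) (hsum : ∑ S ∈ kSets n k, μ S = 1) :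
    ∑ i, statDist μ k i = 1 := by
  have hk0 : (k : ℝ) ≠ 0 := Nat.cast_ne_zero.2 hk
  simp only [statDist, ← Finset.sum_div, sum_margin hsum, div_self hk0]

variable (hk : k ≠ 0) (hmarg : ∀ i, margin μ k i ≠ 0)
include hk hmarg

lemma upDown_mulVec_one : upDown μ k *ᵥ 1 = 1 := by
  ext i
  have hk0 : (k : ℝ) ≠ 0 := Nat.cast_ne_zero.2 hk
  simp only [mulVec, dotProduct, Pi.one_apply, mul_one, upDown_apply, ← Finset.sum_div,
    sum_pairProb]
  field_simp [hmarg i]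

lemma corrMatrix_eq_smul :
    corrMatrix μ k = (k : ℝ) • (upDown μ k - vecMulVec 1 (statDist μ k)) := by
  ext i j
  have hk0 : (k : ℝ) ≠ 0 := Nat.cast_ne_zero.2 hk
  have hi := hmarg i
  simp only [corrMatrix, condProb, Matrix.smul_apply, Matrix.sub_apply, vecMulVec_apply,
    upDown_apply, statDist, Pi.one_apply, one_mul, smul_eq_mul]
  split_ifs with hij
  · subst hij
    rw [pairProb_self]
    field_simp
  · field_simp

end upDown

theorem lambdaTwo_upDown_eq_lambdaMax_corr_div_k_general
    (n k : ℕ) (μ : Finset (Fin n) → ℝ)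
    (hk : 1 ≤ k)
    (hnonneg : ∀ S, 0 ≤ μ S)
    (hsum : ∑ S ∈ kSets n k, μ S = 1)
    (hmarg : ∀ i, 0 < margin μ k i) :
    lambdaTwo μ k = lambdaMax (corrMatrix μ k) / k := by
  have hk0 : k ≠ 0 := by omega
  have hkR : (0 : ℝ) < k := by exact_mod_cast hk
  have hmarg0 : ∀ i, margin μ k i ≠ 0 := fun i => (hmarg i).ne'
  show sSup (rayleighQuotientSet (statDist μ k) (upDown μ k)) = _
  rw [corrMatrix_eq_smul hk0 hmarg0, lambdaMax_smul _ hkR, mul_div_cancel_left₀ _ hkR.ne']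
  exact sSup_rayleighQuotientSet_eq_lambdaMax (statDist_pos hk hmarg)
    (statDist_mul_upDown_comm hmarg0) (sum_statDist hk0 hsum) (upDown_mulVec_one hk0 hmarg0)
    (sum_statDist_mul_upDown_mulVec_nonneg hnonneg hmarg0)

/-- For a distribution `μ` on k-subsets of `[n]`, the second-largest
eigenvalue of the `1 ↔ k` up-down walk `P = U_{1→k} D_{k→1}` equals `λ_max(Ψ_μ)/k`. -/
theorem lambdaTwo_upDown_eq_lambdaMax_corr_div_k
    (n k : ℕ) (μ : Finset (Fin n) → ℝ)
    (hn : 2 ≤ n) (hk : 1 ≤ k)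
    (hnonneg : ∀ S, 0 ≤ μ S)
    (hsum : ∑ S ∈ kSets n k, μ S = 1)
    (hmarg : ∀ i, 0 < margin μ k i) :
    lambdaTwo μ k = lambdaMax (corrMatrix μ k) / k :=
  lambdaTwo_upDown_eq_lambdaMax_corr_div_k_general n k μ hk hnonneg hsum hmarg

end
end

section
/- Let μ and μ' be probability distributions on a finite product space Ω = Ω₁ × ⋯ × Ω_n with μ(x) ∝ μ'(x)·exp(W(x)), and suppose μ' satisfies approximate tensorization of entropy with constant C, i.e. Ent_{μ'}(f) ≤ C Σ_i E_{μ'}[Ent_i(f)] for all positive f. Then μ satisfies approximate tensorization of entropy with constant exp(6‖W‖_∞)·C. -/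
open Finset BigOperators

noncomputable section

/-- Entropy functional `Ent_p(f)` on a finite space. -/
def entFun {Ω : Type*} [Fintype Ω] (p : Ω → ℝ) (f : Ω → ℝ) : ℝ :=
  (∑ x, p x * f x * Real.log (f x)) -
    (∑ x, p x * f x) * Real.log (∑ x, p x * f x)

variable {n : ℕ} {Ω : Fin n → Type*}

/-- Conditional entropy `Ent_i(f)(x)`: the entropy of `f` with respect to the conditional law
of coordinate `i` of `μ`, given the other coordinates of `x`. -/
def condEnt [∀ i, Fintype (Ω i)] [∀ i, DecidableEq (Ω i)]
    (μ : (∀ i, Ω i) → ℝ) (i : Fin n) (x : ∀ i, Ω i) (f : (∀ i, Ω i) → ℝ) : ℝ :=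
  entFun (fun a : Ω i => μ (Function.update x i a) / ∑ b, μ (Function.update x i b))
    (fun a : Ω i => f (Function.update x i a))

/-- Approximate tensorization of entropy with constant `C`:
`Ent_μ(f) ≤ C Σ_i E_μ[Ent_i(f)]` for all positive `f`. -/
def ApproxTensorization [∀ i, Fintype (Ω i)] [∀ i, DecidableEq (Ω i)]
    (μ : (∀ i, Ω i) → ℝ) (C : ℝ) : Prop :=
  ∀ f : (∀ i, Ω i) → ℝ, (∀ x, 0 < f x) →
    entFun μ f ≤ C * ∑ i, ∑ x, μ x * condEnt μ i x f

lemma sum_phi {Ω : Type*} [Fintype Ω] (q f : Ω → ℝ) (t : ℝ) (hqs : ∑ x, q x = 1) :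
    ∑ x, q x * (f x * Real.log (f x) - f x * Real.log t - f x + t)
      = (∑ x, q x * f x * Real.log (f x)) - (∑ x, q x * f x) * Real.log t
        - (∑ x, q x * f x) + t := by
  have : ∀ x : Ω, q x * (f x * Real.log (f x) - f x * Real.log t - f x + t)
      = q x * f x * Real.log (f x) - (q x * f x) * Real.log t - q x * f x + q x * t := by
    intro x; ring
  rw [Finset.sum_congr rfl (fun x _ => this x)]
  rw [Finset.sum_add_distrib, Finset.sum_sub_distrib, Finset.sum_sub_distrib,
    ← Finset.sum_mul, ← Finset.sum_mul, hqs, one_mul]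

lemma phi_nonneg {u t : ℝ} (hu : 0 < u) (ht : 0 < t) :
    0 ≤ u * Real.log u - u * Real.log t - u + t := by
  have h := Real.log_le_sub_one_of_pos (show 0 < t / u by positivity)
  rw [Real.log_div ht.ne' hu.ne'] at h
  have h2 : t / u * u = t := div_mul_cancel₀ t hu.ne'
  nlinarith [mul_le_mul_of_nonneg_left h hu.le, h2]

lemma entFun_le_of_ratio {Ω : Type*} [Fintype Ω] (p q f : Ω → ℝ) (K : ℝ)
    (hp : ∀ x, 0 ≤ p x) (hq : ∀ x, 0 ≤ q x)
    (hps : ∑ x, p x = 1) (hqs : ∑ x, q x = 1)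
    (hf : ∀ x, 0 < f x) (hpq : ∀ x, p x ≤ K * q x) :
    entFun p f ≤ K * entFun q f := by
  have hspos : 0 < ∑ x, p x * f x := by
    have : ∃ x : Ω, 0 < p x := by
      by_contra h
      push_neg at h
      have : ∑ x : Ω, p x = 0 :=
        Finset.sum_eq_zero fun x _ => le_antisymm (h x) (hp x)
      rw [hps] at this; norm_num at this
    obtain ⟨x0, hx0⟩ := this
    exact Finset.sum_pos' (fun x _ => mul_nonneg (hp x) (hf x).le)
      ⟨x0, Finset.mem_univ x0, mul_pos hx0 (hf x0)⟩
  have htpos : 0 < ∑ x, q x * f x := by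
    have : ∃ x : Ω, 0 < q x := by
      by_contra h
      push_neg at h
      have : ∑ x : Ω, q x = 0 :=
        Finset.sum_eq_zero fun x _ => le_antisymm (h x) (hq x)
      rw [hqs] at this; norm_num at this
    obtain ⟨x0, hx0⟩ := this
    exact Finset.sum_pos' (fun x _ => mul_nonneg (hq x) (hf x).le)
      ⟨x0, Finset.mem_univ x0, mul_pos hx0 (hf x0)⟩
  set s := ∑ x, p x * f x with hs
  set t := ∑ x, q x * f x with ht
  have step1 : entFun p f ≤ ∑ x, p x * (f x * Real.log (f x) - f x * Real.log t - f x + t) := by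
    rw [sum_phi p f t hps]
    have hlog := Real.log_le_sub_one_of_pos (show 0 < t / s by positivity)
    rw [Real.log_div htpos.ne' hspos.ne'] at hlog
    have hcan : t / s * s = t := div_mul_cancel₀ t hspos.ne'
    have : s * (Real.log t - Real.log s) ≤ t - s := by
      nlinarith [mul_le_mul_of_nonneg_left hlog hspos.le, hcan]
    unfold entFun
    rw [← hs]
    nlinarith [this]
  have step2 : ∑ x, p x * (f x * Real.log (f x) - f x * Real.log t - f x + t)
      ≤ ∑ x, (K * q x) * (f x * Real.log (f x) - f x * Real.log t - f x + t) := by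
    apply Finset.sum_le_sum
    intro x _
    exact mul_le_mul_of_nonneg_right (hpq x) (phi_nonneg (hf x) htpos)
  have step3 : ∑ x, (K * q x) * (f x * Real.log (f x) - f x * Real.log t - f x + t)
      = K * entFun q f := by
    have : ∑ x, (K * q x) * (f x * Real.log (f x) - f x * Real.log t - f x + t)
        = K * ∑ x, q x * (f x * Real.log (f x) - f x * Real.log t - f x + t) := by
      rw [Finset.mul_sum]; apply Finset.sum_congr rfl; intros; ring
    rw [this, sum_phi q f t hqs]
    unfold entFun
    rw [← ht]
    ring
  linarith

lemma entFun_nonneg {Ω : Type*} [Fintype Ω] (q f : Ω → ℝ)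
    (hq : ∀ x, 0 ≤ q x) (hqs : ∑ x, q x = 1) (hf : ∀ x, 0 < f x) :
    0 ≤ entFun q f := by
  have := entFun_le_of_ratio q q f 1 hq hq hqs hqs hf (fun x => by linarith [hq x])
  -- that's useless; direct proof:
  have htpos : 0 < ∑ x, q x * f x := by
    have : ∃ x : Ω, 0 < q x := by
      by_contra h
      push_neg at h
      have : ∑ x : Ω, q x = 0 :=
        Finset.sum_eq_zero fun x _ => le_antisymm (h x) (hq x)
      rw [hqs] at this; norm_num at this
    obtain ⟨x0, hx0⟩ := this
    exact Finset.sum_pos' (fun x _ => mul_nonneg (hq x) (hf x).le)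
      ⟨x0, Finset.mem_univ x0, mul_pos hx0 (hf x0)⟩
  set t := ∑ x, q x * f x with ht
  have h0 : 0 ≤ ∑ x, q x * (f x * Real.log (f x) - f x * Real.log t - f x + t) :=
    Finset.sum_nonneg fun x _ => mul_nonneg (hq x) (phi_nonneg (hf x) htpos)
  rw [sum_phi q f t hqs] at h0
  unfold entFun
  rw [← ht]
  linarith

lemma condEnt_nonneg [∀ i, Fintype (Ω i)] [∀ i, DecidableEq (Ω i)]
    (μ : (∀ i, Ω i) → ℝ) (i : Fin n) (x : ∀ i, Ω i) (f : (∀ i, Ω i) → ℝ)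
    (hμ : ∀ y, 0 ≤ μ y) (hf : ∀ y, 0 < f y) :
    0 ≤ condEnt μ i x f := by
  set S := ∑ b, μ (Function.update x i b) with hS
  rcases eq_or_lt_of_le (Finset.sum_nonneg fun b _ => hμ (Function.update x i b)) with h0 | hpos
  · -- S = 0, so all terms zero
    have hz : ∀ a : Ω i, μ (Function.update x i a) = 0 := by
      intro a
      have := (Finset.sum_eq_zero_iff_of_nonneg
        (fun b _ => hμ (Function.update x i b))).mp h0.symm
      exact this a (Finset.mem_univ a)
    unfold condEnt
    rw [← hS]
    simp only [hz, zero_div]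
    unfold entFun
    simp
  · apply entFun_nonneg
    · intro a; exact div_nonneg (hμ _) hpos.le
    · rw [← Finset.sum_div, ← hS, div_self hpos.ne']
    · intro a; exact hf _

lemma condEnt_le_of_ratio [∀ i, Fintype (Ω i)] [∀ i, DecidableEq (Ω i)]
    (ν ν' : (∀ i, Ω i) → ℝ) (i : Fin n) (x : ∀ i, Ω i) (f : (∀ i, Ω i) → ℝ)
    (hν : ∀ y, 0 ≤ ν y) (hν' : ∀ y, 0 ≤ ν' y) (hf : ∀ y, 0 < f y)
    (K : ℝ) (hK : 0 ≤ K)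
    (hratio : ∀ a b : Ω i, ν' (Function.update x i a) * ν (Function.update x i b)
      ≤ K * (ν (Function.update x i a) * ν' (Function.update x i b)))
    (hSS : (∑ b, ν' (Function.update x i b)) ≠ 0 → 0 < ∑ b, ν (Function.update x i b)) :
    condEnt ν' i x f ≤ K * condEnt ν i x f := by
  set S := ∑ b, ν (Function.update x i b) with hS
  set S' := ∑ b, ν' (Function.update x i b) with hS'
  rcases eq_or_ne S' 0 with h0 | hne
  · have hz : ∀ a : Ω i, ν' (Function.update x i a) = 0 := by
      intro a
      have := (Finset.sum_eq_zero_iff_of_nonneg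
        (fun b _ => hν' (Function.update x i b))).mp (hS' ▸ h0)
      exact this a (Finset.mem_univ a)
    have hL : condEnt ν' i x f = 0 := by
      unfold condEnt
      rw [← hS']
      simp only [hz, zero_div]
      unfold entFun
      simp
    rw [hL]
    exact mul_nonneg hK (condEnt_nonneg ν i x f hν hf)
  · have hSpos : 0 < S := hSS hne
    have hS'pos : 0 < S' :=
      lt_of_le_of_ne (Finset.sum_nonneg fun b _ => hν' (Function.update x i b)) (Ne.symm hne)
    apply entFun_le_of_ratio
    · intro a; exact div_nonneg (hν' _) hS'pos.le
    · intro a; exact div_nonneg (hν _) hSpos.le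
    · rw [← Finset.sum_div, ← hS', div_self hS'pos.ne']
    · rw [← Finset.sum_div, ← hS, div_self hSpos.ne']
    · intro a; exact hf _
    · intro a
      have hsum : ν' (Function.update x i a) * S ≤ K * ν (Function.update x i a) * S' := by
        rw [hS, hS', Finset.mul_sum, Finset.mul_sum]
        apply Finset.sum_le_sum
        intro b _
        calc ν' (Function.update x i a) * ν (Function.update x i b)
            ≤ K * (ν (Function.update x i a) * ν' (Function.update x i b)) := hratio a b
          _ = K * ν (Function.update x i a) * ν' (Function.update x i b) := by ring
      show ν' (Function.update x i a) / S' ≤ K * (ν (Function.update x i a) / S)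
      rw [div_le_iff₀ hS'pos]
      calc ν' (Function.update x i a) = ν' (Function.update x i a) * S / S := by
            field_simp
        _ ≤ K * ν (Function.update x i a) * S' / S := by gcongr
        _ = K * (ν (Function.update x i a) / S) * S' := by ring


/-- comparison for approximate tensorization. If `μ ∝ μ' exp(W)` on a
finite product space and `μ'` satisfies approximate tensorization with constant `C`, then `μ`
satisfies approximate tensorization with constant `exp(6‖W‖_∞) C`. -/
theorem approx_tensorization_comparison
    [∀ i, Fintype (Ω i)] [∀ i, DecidableEq (Ω i)] [∀ i, Nonempty (Ω i)]
    (μ μ' W : (∀ i, Ω i) → ℝ) (c C : ℝ)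
    (hμnonneg : ∀ x, 0 ≤ μ x) (hμsum : ∑ x, μ x = 1)
    (hμ'nonneg : ∀ x, 0 ≤ μ' x) (hμ'sum : ∑ x, μ' x = 1)
    (hc : 0 < c)
    (hrel : ∀ x, μ x = c * μ' x * Real.exp (W x))
    (hAT : ApproxTensorization μ' C) :
    ApproxTensorization μ (Real.exp (6 * ⨆ x, |W x|) * C) := by
  set M := ⨆ x, |W x| with hMdef
  have hM : ∀ x, |W x| ≤ M :=
    fun x => le_ciSup (f := fun y => |W y|) (Set.Finite.bddAbove (Set.finite_range _)) x
  have hWb : ∀ x, -M ≤ W x ∧ W x ≤ M := fun x => abs_le.mp (hM x)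
  have hM0 : 0 ≤ M := le_trans (abs_nonneg _) (hM (Classical.arbitrary _))
  -- bounds on c
  have hcle : c ≤ Real.exp M := by
    have h1 : c * Real.exp (-M) ≤ 1 := by
      calc c * Real.exp (-M) = ∑ x, μ' x * (c * Real.exp (-M)) := by
            rw [← Finset.sum_mul, hμ'sum, one_mul]
        _ ≤ ∑ x, μ x := by
            apply Finset.sum_le_sum
            intro x _
            rw [hrel x]
            have hE : Real.exp (-M) ≤ Real.exp (W x) :=
              Real.exp_le_exp.mpr (hWb x).1
            nlinarith [hμ'nonneg x, hc, mul_le_mul_of_nonneg_left hE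
              (mul_nonneg hc.le (hμ'nonneg x))]
        _ = 1 := hμsum
    have := mul_le_mul_of_nonneg_right h1 (Real.exp_pos M).le
    rw [mul_assoc, ← Real.exp_add, neg_add_cancel, Real.exp_zero, mul_one, one_mul] at this
    exact this
  have hcge : Real.exp (-M) ≤ c := by
    have h1 : 1 ≤ c * Real.exp M := by
      calc (1:ℝ) = ∑ x, μ x := hμsum.symm
        _ ≤ ∑ x, μ' x * (c * Real.exp M) := by
            apply Finset.sum_le_sum
            intro x _
            rw [hrel x]
            have hE : Real.exp (W x) ≤ Real.exp M :=
              Real.exp_le_exp.mpr (hWb x).2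
            nlinarith [hμ'nonneg x, hc, mul_le_mul_of_nonneg_left hE
              (mul_nonneg hc.le (hμ'nonneg x))]
        _ = c * Real.exp M := by rw [← Finset.sum_mul, hμ'sum, one_mul]
    have := mul_le_mul_of_nonneg_right h1 (Real.exp_pos (-M)).le
    rw [one_mul, mul_assoc, ← Real.exp_add, add_neg_cancel, Real.exp_zero, mul_one] at this
    exact this
  have h2M : Real.exp (2*M) = Real.exp M * Real.exp M := by
    rw [← Real.exp_add]; ring_nf
  -- pointwise comparison
  have hμle : ∀ x, μ x ≤ Real.exp (2*M) * μ' x := by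
    intro x
    rw [hrel x, h2M]
    have hE : Real.exp (W x) ≤ Real.exp M := Real.exp_le_exp.mpr (hWb x).2
    nlinarith [hμ'nonneg x, hc, Real.exp_pos M, Real.exp_pos (W x),
      mul_le_mul_of_nonneg_left hE (mul_nonneg hc.le (hμ'nonneg x)),
      mul_le_mul_of_nonneg_right hcle (mul_nonneg (hμ'nonneg x) (Real.exp_pos M).le)]
  have hμ'le : ∀ x, μ' x ≤ Real.exp (2*M) * μ x := by
    intro x
    rw [hrel x, h2M]
    have hE : Real.exp (-M) ≤ Real.exp (W x) := Real.exp_le_exp.mpr (hWb x).1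
    have key : Real.exp (-M) * (Real.exp (-M) * μ' x) ≤ c * μ' x * Real.exp (W x) := by
      nlinarith [hμ'nonneg x, Real.exp_pos (-M),
        mul_le_mul_of_nonneg_right hcge (mul_nonneg (Real.exp_pos (-M)).le (hμ'nonneg x)),
        mul_le_mul_of_nonneg_left hE (mul_nonneg hc.le (hμ'nonneg x))]
    have hcan : Real.exp M * Real.exp (-M) = 1 := by
      rw [← Real.exp_add, add_neg_cancel, Real.exp_zero]
    have hcan2 : Real.exp M * Real.exp M * (Real.exp (-M) * (Real.exp (-M) * μ' x)) = μ' x := by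
      rw [show Real.exp M * Real.exp M * (Real.exp (-M) * (Real.exp (-M) * μ' x))
        = (Real.exp M * Real.exp (-M)) * ((Real.exp M * Real.exp (-M)) * μ' x) from by ring,
        hcan, one_mul, one_mul]
    linarith [mul_le_mul_of_nonneg_left key (mul_nonneg (Real.exp_pos M).le (Real.exp_pos M).le),
      hcan2]
  have hK2 : (0:ℝ) ≤ Real.exp (2*M) := (Real.exp_pos _).le
  intro f hf
  -- cross ratio bounds
  have hratio1 : ∀ (i : Fin n) (x : ∀ j, Ω j) (a b : Ω i),
      μ' (Function.update x i a) * μ (Function.update x i b)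
        ≤ Real.exp (2*M) * (μ (Function.update x i a) * μ' (Function.update x i b)) := by
    intro i x a b
    rw [hrel (Function.update x i a), hrel (Function.update x i b)]
    have hWW : Real.exp (W (Function.update x i b))
        ≤ Real.exp (2*M) * Real.exp (W (Function.update x i a)) := by
      rw [← Real.exp_add]
      apply Real.exp_le_exp.mpr
      have h1 := hWb (Function.update x i a)
      have h2 := hWb (Function.update x i b)
      linarith [h1.1, h2.2]
    have hnn : 0 ≤ c * μ' (Function.update x i a) * μ' (Function.update x i b) := by
      have := hμ'nonneg (Function.update x i a)
      have := hμ'nonneg (Function.update x i b)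
      positivity
    nlinarith [mul_le_mul_of_nonneg_left hWW hnn]
  have hratio2 : ∀ (i : Fin n) (x : ∀ j, Ω j) (a b : Ω i),
      μ (Function.update x i a) * μ' (Function.update x i b)
        ≤ Real.exp (2*M) * (μ' (Function.update x i a) * μ (Function.update x i b)) := by
    intro i x a b
    rw [hrel (Function.update x i a), hrel (Function.update x i b)]
    have hWW : Real.exp (W (Function.update x i a))
        ≤ Real.exp (2*M) * Real.exp (W (Function.update x i b)) := by
      rw [← Real.exp_add]
      apply Real.exp_le_exp.mpr
      have h1 := hWb (Function.update x i a)
      have h2 := hWb (Function.update x i b)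
      linarith [h1.2, h2.1]
    have hnn : 0 ≤ c * μ' (Function.update x i a) * μ' (Function.update x i b) := by
      have := hμ'nonneg (Function.update x i a)
      have := hμ'nonneg (Function.update x i b)
      positivity
    nlinarith [mul_le_mul_of_nonneg_left hWW hnn]
  -- support equivalence for conditional sums
  have hpos_of_pos' : ∀ y, 0 < μ' y → 0 < μ y := by
    intro y hy; rw [hrel y]; positivity
  have hpos_of_pos : ∀ y, 0 < μ y → 0 < μ' y := by
    intro y hy
    rcases (hμ'nonneg y).lt_or_eq with h | h
    · exact h
    · exfalso; rw [hrel y, ← h, mul_zero, zero_mul] at hy; exact lt_irrefl 0 hy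
  have hSS1 : ∀ (i : Fin n) (x : ∀ j, Ω j),
      (∑ b, μ' (Function.update x i b)) ≠ 0 → 0 < ∑ b, μ (Function.update x i b) := by
    intro i x h
    obtain ⟨b, -, hb⟩ := Finset.exists_ne_zero_of_sum_ne_zero h
    exact Finset.sum_pos' (fun b _ => hμnonneg _)
      ⟨b, Finset.mem_univ b, hpos_of_pos' _ (lt_of_le_of_ne (hμ'nonneg _) (Ne.symm hb))⟩
  have hSS2 : ∀ (i : Fin n) (x : ∀ j, Ω j),
      (∑ b, μ (Function.update x i b)) ≠ 0 → 0 < ∑ b, μ' (Function.update x i b) := by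
    intro i x h
    obtain ⟨b, -, hb⟩ := Finset.exists_ne_zero_of_sum_ne_zero h
    exact Finset.sum_pos' (fun b _ => hμ'nonneg _)
      ⟨b, Finset.mem_univ b, hpos_of_pos _ (lt_of_le_of_ne (hμnonneg _) (Ne.symm hb))⟩
  -- conditional entropy comparisons
  have hcond1 : ∀ (i : Fin n) (x : ∀ j, Ω j),
      condEnt μ' i x f ≤ Real.exp (2*M) * condEnt μ i x f :=
    fun i x => condEnt_le_of_ratio μ μ' i x f hμnonneg hμ'nonneg hf _ hK2
      (hratio1 i x) (hSS1 i x)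
  have hcond2 : ∀ (i : Fin n) (x : ∀ j, Ω j),
      condEnt μ i x f ≤ Real.exp (2*M) * condEnt μ' i x f :=
    fun i x => condEnt_le_of_ratio μ' μ i x f hμ'nonneg hμnonneg hf _ hK2
      (hratio2 i x) (hSS2 i x)
  set A := ∑ i, ∑ x, μ x * condEnt μ i x f with hA
  set A' := ∑ i, ∑ x, μ' x * condEnt μ' i x f with hA'
  have hAnn : 0 ≤ A := Finset.sum_nonneg fun i _ => Finset.sum_nonneg fun x _ =>
    mul_nonneg (hμnonneg x) (condEnt_nonneg μ i x f hμnonneg hf)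
  have hA'nn : 0 ≤ A' := Finset.sum_nonneg fun i _ => Finset.sum_nonneg fun x _ =>
    mul_nonneg (hμ'nonneg x) (condEnt_nonneg μ' i x f hμ'nonneg hf)
  have hAA' : A' ≤ Real.exp (2*M) * Real.exp (2*M) * A := by
    have : A' ≤ ∑ i, ∑ x, (Real.exp (2*M) * μ x) * (Real.exp (2*M) * condEnt μ i x f) := by
      apply Finset.sum_le_sum; intro i _
      apply Finset.sum_le_sum; intro x _
      calc μ' x * condEnt μ' i x f
          ≤ μ' x * (Real.exp (2*M) * condEnt μ i x f) :=
            mul_le_mul_of_nonneg_left (hcond1 i x) (hμ'nonneg x)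
        _ ≤ (Real.exp (2*M) * μ x) * (Real.exp (2*M) * condEnt μ i x f) :=
            mul_le_mul_of_nonneg_right (hμ'le x)
              (mul_nonneg hK2 (condEnt_nonneg μ i x f hμnonneg hf))
    calc A' ≤ _ := this
      _ = Real.exp (2*M) * Real.exp (2*M) * A := by
          rw [hA, Finset.mul_sum]
          apply Finset.sum_congr rfl; intro i _
          rw [Finset.mul_sum]
          apply Finset.sum_congr rfl; intro x _
          ring
  have hA'A : A ≤ Real.exp (2*M) * Real.exp (2*M) * A' := by
    have : A ≤ ∑ i, ∑ x, (Real.exp (2*M) * μ' x) * (Real.exp (2*M) * condEnt μ' i x f) := by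
      apply Finset.sum_le_sum; intro i _
      apply Finset.sum_le_sum; intro x _
      calc μ x * condEnt μ i x f
          ≤ μ x * (Real.exp (2*M) * condEnt μ' i x f) :=
            mul_le_mul_of_nonneg_left (hcond2 i x) (hμnonneg x)
        _ ≤ (Real.exp (2*M) * μ' x) * (Real.exp (2*M) * condEnt μ' i x f) :=
            mul_le_mul_of_nonneg_right (hμle x)
              (mul_nonneg hK2 (condEnt_nonneg μ' i x f hμ'nonneg hf))
    calc A ≤ _ := this
      _ = Real.exp (2*M) * Real.exp (2*M) * A' := by
          rw [hA', Finset.mul_sum]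
          apply Finset.sum_congr rfl; intro i _
          rw [Finset.mul_sum]
          apply Finset.sum_congr rfl; intro x _
          ring
  have h1 : entFun μ f ≤ Real.exp (2*M) * entFun μ' f :=
    entFun_le_of_ratio μ μ' f _ hμnonneg hμ'nonneg hμsum hμ'sum hf hμle
  have h2 : entFun μ' f ≤ C * A' := hAT f hf
  have h6 : Real.exp (6*M) = Real.exp (2*M) * (Real.exp (2*M) * Real.exp (2*M)) := by
    rw [← Real.exp_add, ← Real.exp_add]; ring_nf
  have h2' : 0 ≤ entFun μ' f := entFun_nonneg μ' f hμ'nonneg hμ'sum hf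
  show entFun μ f ≤ Real.exp (6*M) * C * A
  rcases le_or_gt 0 C with hC | hC
  · calc entFun μ f ≤ Real.exp (2*M) * entFun μ' f := h1
      _ ≤ Real.exp (2*M) * (C * A') := mul_le_mul_of_nonneg_left h2 hK2
      _ ≤ Real.exp (2*M) * (C * (Real.exp (2*M) * Real.exp (2*M) * A)) := by
          apply mul_le_mul_of_nonneg_left _ hK2
          exact mul_le_mul_of_nonneg_left hAA' hC
      _ = Real.exp (6*M) * C * A := by rw [h6]; ring
  · have hCA' : C * A' ≤ 0 := mul_nonpos_of_nonpos_of_nonneg hC.le hA'nn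
    have hent0 : entFun μ' f = 0 := le_antisymm (le_trans h2 hCA') h2'
    have hA'0 : A' = 0 := by
      by_contra h
      have hA'pos : 0 < A' := lt_of_le_of_ne hA'nn (Ne.symm h)
      nlinarith [h2, hent0]
    have hA0 : A = 0 := le_antisymm (by rw [hA'0] at hA'A; linarith) hAnn
    rw [hA0, mul_zero]
    calc entFun μ f ≤ Real.exp (2*M) * entFun μ' f := h1
      _ = 0 := by rw [hent0, mul_zero]

end
end

section
/- Suppose a probability measure μ on a finite product space Ω₁ × ⋯ × Ω_n admits, for every pair of configurations (X₀, Y₀), a coupling (X₁, Y₁) of one step of the Glauber dynamics P satisfying E[d(X₁,Y₁)] ≤ κ·d(X₀,Y₀) for some metric d, with κ ≤ 1 − ε/n. Then μ is (1/ε)-spectrally independent. -/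
open Finset BigOperators

noncomputable section

variable {n : ℕ} {Ω : Fin n → Type*}

/-- Glauber dynamics for `μ` on a finite product space: resample a uniformly random
coordinate from its conditional law. -/
def glauber [∀ i, Fintype (Ω i)] [∀ i, DecidableEq (Ω i)]
    (μ : (∀ i, Ω i) → ℝ) (x y : ∀ i, Ω i) : ℝ :=
  (1 / (n : ℝ)) * ∑ i, (if ∀ j, j ≠ i → y j = x j
    then μ y / ∑ a, μ (Function.update x i a) else 0)

/-- `P_μ[σ_i = a]` for a pair `u = (i,a)`. -/
def marg [∀ i, Fintype (Ω i)] [∀ i, DecidableEq (Ω i)]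
    (μ : (∀ i, Ω i) → ℝ) (u : Σ i, Ω i) : ℝ :=
  ∑ x, if x u.1 = u.2 then μ x else 0

/-- `P_μ[σ_i = a ∧ σ_j = b]`. -/
def pairMarg [∀ i, Fintype (Ω i)] [∀ i, DecidableEq (Ω i)]
    (μ : (∀ i, Ω i) → ℝ) (u v : Σ i, Ω i) : ℝ :=
  ∑ x, if x u.1 = u.2 ∧ x v.1 = v.2 then μ x else 0

/-- The correlation matrix `Ψ_μ` of the homogenized measure, indexed by pairs `(i, a)`:
`Ψ(u,v) = P[v | u] − P[v]` for `u ≠ v` and `1 − P[u]` on the diagonal. -/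
def corrMatrixProd [∀ i, Fintype (Ω i)] [∀ i, DecidableEq (Ω i)]
    (μ : (∀ i, Ω i) → ℝ) : Matrix (Σ i, Ω i) (Σ i, Ω i) ℝ :=
  fun u v => if u = v then 1 - marg μ u else pairMarg μ u v / marg μ u - marg μ v

/-! The correlation matrix satisfies `D Ψ = Cov`, where `D = diag P[σ_i = a]` and `Cov` is the
covariance matrix of the indicators `[σ_i = a]`. Hence an eigenpair `Ψ v = t v` gives
`Var_μ f = t · vᵀ D v` for the linear statistic `f x = ∑ i, v (i, x i)`, and it suffices to show
`ε · Var_μ f ≤ vᵀ D v`.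

A contractive coupling makes the Glauber operator `P` shrink Lipschitz constants by `κ`, so the
correlations `a m = ⟨h, Pᵐ h⟩` of a centred `h` decay like `κ ^ m`. As `P` is reversible,
Cauchy–Schwarz gives `(a m)² ≤ a 0 · a (2m)`, and iterating along powers of two turns the decay
into the spectral-gap bound `⟨h, P h⟩ ≤ κ ⟨h, h⟩`. On the other hand `P` is the average of the
`n` single-site conditional expectations, and `f` differs from `v (i, x i)` by a function that
the `i`-th one fixes, so the Dirichlet form of `f` is at most `vᵀ D v / n`. Together:
`ε Var f ≤ n (1 - κ) Var f ≤ vᵀ D v`. -/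

open scoped Matrix

section FiniteMarkovChain

variable {α : Type*} [Fintype α]

def wInner (μ : α → ℝ) : LinearMap.BilinForm ℝ (α → ℝ) :=
  LinearMap.mk₂ ℝ (fun g h => ∑ x, μ x * (g x * h x))
    (fun _ _ _ => by simp only [Pi.add_apply, ← sum_add_distrib]; congr! 1 with x; ring)
    (fun _ _ _ => by simp only [Pi.smul_apply, smul_eq_mul, mul_sum]; congr! 1 with x; ring)
    (fun _ _ _ => by simp only [Pi.add_apply, ← sum_add_distrib]; congr! 1 with x; ring)
    (fun _ _ _ => by simp only [Pi.smul_apply, smul_eq_mul, mul_sum]; congr! 1 with x; ring)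

lemma wInner_apply (μ g h : α → ℝ) : wInner μ g h = ∑ x, μ x * (g x * h x) := rfl

lemma wInner_self_nonneg {μ : α → ℝ} (hμ : ∀ x, 0 ≤ μ x) (g : α → ℝ) : 0 ≤ wInner μ g g :=
  sum_nonneg fun x _ => mul_nonneg (hμ x) (mul_self_nonneg (g x))

lemma wInner_sq_le {μ : α → ℝ} (hμ : ∀ x, 0 ≤ μ x) (g h : α → ℝ) :
    wInner μ g h ^ 2 ≤ wInner μ g g * wInner μ h h :=
  sum_sq_le_sum_mul_sum_of_sq_le_mul _ (fun x _ => mul_nonneg (hμ x) (mul_self_nonneg (g x)))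
    (fun x _ => mul_nonneg (hμ x) (mul_self_nonneg (h x))) (fun x _ => le_of_eq (by ring))

def center (μ f : α → ℝ) (x : α) : ℝ := f x - ∑ y, μ y * f y

lemma sum_mul_center {μ : α → ℝ} (hμ : ∑ x, μ x = 1) (f : α → ℝ) :
    ∑ x, μ x * center μ f x = 0 := by
  simp only [center, mul_sub, sum_sub_distrib, ← sum_mul, hμ, one_mul, sub_self]

lemma wInner_center_self {μ : α → ℝ} (hμ : ∑ x, μ x = 1) (f : α → ℝ) :
    wInner μ (center μ f) (center μ f) = ∑ x, μ x * f x ^ 2 - (∑ x, μ x * f x) ^ 2 := by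
  set c := ∑ x, μ x * f x with hc
  calc wInner μ (center μ f) (center μ f)
      = ∑ x, (μ x * f x ^ 2 - 2 * c * (μ x * f x) + c ^ 2 * μ x) :=
        sum_congr rfl fun x _ => by simp only [center, ← hc]; ring
    _ = ∑ x, μ x * f x ^ 2 - 2 * c * c + c ^ 2 * ∑ x, μ x := by
        rw [sum_add_distrib, sum_sub_distrib, ← mul_sum, ← mul_sum]
    _ = ∑ x, μ x * f x ^ 2 - c ^ 2 := by rw [hμ]; ring

def IsReversible (μ : α → ℝ) (K : Matrix α α ℝ) : Prop :=
  ∀ x y, μ x * K x y = μ y * K y x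

lemma IsReversible.wInner_mulVec {μ : α → ℝ} {K : Matrix α α ℝ} (hK : IsReversible μ K)
    (g h : α → ℝ) : wInner μ g (K *ᵥ h) = wInner μ (K *ᵥ g) h := by
  simp only [wInner_apply, Matrix.mulVec, dotProduct, mul_sum, sum_mul]
  rw [sum_comm]
  refine sum_congr rfl fun x _ => sum_congr rfl fun y _ => ?_
  linear_combination (g y * h x) * hK y x

lemma IsReversible.wInner_pow_mulVec [DecidableEq α] {μ : α → ℝ} {K : Matrix α α ℝ}
    (hK : IsReversible μ K) (m : ℕ) (g h : α → ℝ) :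
    wInner μ g (K ^ m *ᵥ h) = wInner μ (K ^ m *ᵥ g) h := by
  induction m generalizing h with
  | zero => simp
  | succ m ih =>
    rw [pow_succ, ← Matrix.mulVec_mulVec, ih, hK.wInner_mulVec, Matrix.mulVec_mulVec, ← pow_succ',
      pow_succ]

lemma IsReversible.wInner_pow_mulVec_sq_le [DecidableEq α] {μ : α → ℝ} {K : Matrix α α ℝ}
    (hK : IsReversible μ K) (hμ : ∀ x, 0 ≤ μ x) (h : α → ℝ) (m : ℕ) :
    wInner μ h (K ^ m *ᵥ h) ^ 2 ≤ wInner μ h h * wInner μ h (K ^ (2 * m) *ᵥ h) := by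
  rw [two_mul, pow_add, ← Matrix.mulVec_mulVec, hK.wInner_pow_mulVec m h (K ^ m *ᵥ h)]
  exact wInner_sq_le hμ h _

def HasContractiveCoupling (K : Matrix α α ℝ) (d : α → α → ℝ) (κ : ℝ) : Prop :=
  ∀ x y : α, ∃ π : α × α → ℝ,
    (∀ z, 0 ≤ π z) ∧ (∀ a, ∑ b, π (a, b) = K x a) ∧ (∀ b, ∑ a, π (a, b) = K y b) ∧
      (∑ z : α × α, π z * d z.1 z.2) ≤ κ * d x y

variable {K : Matrix α α ℝ} {d : α → α → ℝ} {κ : ℝ}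

lemma HasContractiveCoupling.rate_nonneg (hc : HasContractiveCoupling K d κ)
    (hd : ∀ x y, 0 ≤ d x y) {x y : α} (hxy : 0 < d x y) : 0 ≤ κ := by
  obtain ⟨π, hπ, -, -, hπd⟩ := hc x y
  exact nonneg_of_mul_nonneg_left ((sum_nonneg fun z _ => mul_nonneg (hπ z) (hd _ _)).trans hπd)
    hxy

lemma HasContractiveCoupling.abs_mulVec_sub_le (hc : HasContractiveCoupling K d κ)
    {g : α → ℝ} {L : ℝ} (hL : 0 ≤ L) (hg : ∀ a b, |g a - g b| ≤ L * d a b) (x y : α) :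
    |(K *ᵥ g) x - (K *ᵥ g) y| ≤ κ * L * d x y := by
  obtain ⟨π, hπ, hπx, hπy, hπd⟩ := hc x y
  have hx : (K *ᵥ g) x = ∑ z : α × α, π z * g z.1 := by
    simp only [Matrix.mulVec, dotProduct, Fintype.sum_prod_type, ← sum_mul, hπx]
  have hy : (K *ᵥ g) y = ∑ z : α × α, π z * g z.2 := by
    rw [Fintype.sum_prod_type, sum_comm]
    simp only [Matrix.mulVec, dotProduct, ← sum_mul, hπy]
  calc |(K *ᵥ g) x - (K *ᵥ g) y| = |∑ z : α × α, π z * (g z.1 - g z.2)| := by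
        simp only [hx, hy, mul_sub, sum_sub_distrib]
    _ ≤ ∑ z : α × α, π z * |g z.1 - g z.2| := by
        refine (abs_sum_le_sum_abs _ _).trans_eq (sum_congr rfl fun z _ => ?_)
        rw [abs_mul, abs_of_nonneg (hπ z)]
    _ ≤ ∑ z : α × α, π z * (L * d z.1 z.2) := by
        gcongr with z
        exacts [hπ z, hg _ _]
    _ = L * ∑ z : α × α, π z * d z.1 z.2 := by
        rw [mul_sum]
        exact sum_congr rfl fun z _ => by ring
    _ ≤ L * (κ * d x y) := by gcongr
    _ = κ * L * d x y := by ring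

lemma HasContractiveCoupling.abs_pow_mulVec_sub_le [DecidableEq α]
    (hc : HasContractiveCoupling K d κ) (hκ : 0 ≤ κ) {g : α → ℝ} {L : ℝ} (hL : 0 ≤ L)
    (hg : ∀ a b, |g a - g b| ≤ L * d a b) (t : ℕ) (x y : α) :
    |(K ^ t *ᵥ g) x - (K ^ t *ᵥ g) y| ≤ κ ^ t * L * d x y := by
  induction t generalizing x y with
  | zero => simpa using hg x y
  | succ t ih =>
    rw [pow_succ', ← Matrix.mulVec_mulVec]
    calc _ ≤ κ * (κ ^ t * L) * d x y := hc.abs_mulVec_sub_le (by positivity) ih x y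
      _ = κ ^ (t + 1) * L * d x y := by ring

/-- The witness is `L = ∑ a, ∑ b, |g a - g b| / d a b`, whose diagonal terms are `0 / 0 = 0`. -/
lemma exists_abs_sub_le_mul (hd0 : ∀ x, d x x = 0) (hdpos : ∀ x y, x ≠ y → 0 < d x y)
    (g : α → ℝ) : ∃ L, 0 ≤ L ∧ ∀ a b, |g a - g b| ≤ L * d a b := by
  have hterm : ∀ a b, 0 ≤ |g a - g b| / d a b := fun a b => by
    rcases eq_or_ne a b with rfl | hab
    · simp [hd0]
    · exact div_nonneg (abs_nonneg _) (hdpos a b hab).le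
  refine ⟨∑ a, ∑ b, |g a - g b| / d a b,
    sum_nonneg fun a _ => sum_nonneg fun b _ => hterm a b, fun a b => ?_⟩
  rcases eq_or_ne a b with rfl | hab
  · simp [hd0]
  have hle : |g a - g b| / d a b ≤ ∑ a, ∑ b, |g a - g b| / d a b :=
    (single_le_sum (fun b _ => hterm a b) (mem_univ b)).trans
      (single_le_sum (fun a _ => sum_nonneg fun b _ => hterm a b) (mem_univ a))
  calc |g a - g b| = |g a - g b| / d a b * d a b :=
        (div_mul_cancel₀ _ (hdpos a b hab).ne').symm
    _ ≤ (∑ a, ∑ b, |g a - g b| / d a b) * d a b :=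
        mul_le_mul_of_nonneg_right hle (hdpos a b hab).le

lemma HasContractiveCoupling.exists_wInner_pow_mulVec_le [DecidableEq α]
    (hc : HasContractiveCoupling K d κ) (hκ : 0 ≤ κ) (hd0 : ∀ x, d x x = 0)
    (hdpos : ∀ x y, x ≠ y → 0 < d x y) {μ h : α → ℝ} (hmean : ∑ x, μ x * h x = 0) :
    ∃ C, ∀ t : ℕ, wInner μ h (K ^ t *ᵥ h) ≤ C * κ ^ t := by
  obtain ⟨L, hL, hg⟩ := exists_abs_sub_le_mul hd0 hdpos h
  rcases isEmpty_or_nonempty α with _ | ⟨⟨x₀⟩⟩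
  · exact ⟨0, fun t => by simp [wInner_apply]⟩
  refine ⟨L * ∑ x, |μ x * h x| * d x x₀, fun t => ?_⟩
  set g := K ^ t *ᵥ h
  calc wInner μ h g = ∑ x, μ x * h x * (g x - g x₀) := by
        have hconst : ∑ x, μ x * h x * g x₀ = 0 := by rw [← sum_mul, hmean, zero_mul]
        rw [wInner_apply, ← sub_zero (∑ x, _), ← hconst, ← sum_sub_distrib]
        exact sum_congr rfl fun x _ => by ring
    _ ≤ ∑ x, |μ x * h x| * (κ ^ t * L * d x x₀) := by
        refine sum_le_sum fun x _ => (le_abs_self _).trans ?_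
        rw [abs_mul]
        exact mul_le_mul_of_nonneg_left (hc.abs_pow_mulVec_sub_le hκ hL hg t x x₀)
          (abs_nonneg _)
    _ = L * (∑ x, |μ x * h x| * d x x₀) * κ ^ t := by
        rw [mul_sum, sum_mul]
        exact sum_congr rfl fun x _ => by ring

end FiniteMarkovChain

lemma mul_pow_two_pow_le_of_sq_le {a : ℕ → ℝ} (ha₀ : 0 < a 0) (ha₁ : 0 ≤ a 1)
    (hsq : ∀ m, a m ^ 2 ≤ a 0 * a (2 * m)) (k : ℕ) :
    a 0 * a 1 ^ 2 ^ k ≤ a 0 ^ 2 ^ k * a (2 ^ k) := by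
  induction k with
  | zero => simp
  | succ k ih =>
    rw [pow_succ']
    refine le_of_mul_le_mul_left ?_ ha₀
    calc a 0 * (a 0 * a 1 ^ (2 * 2 ^ k)) = (a 0 * a 1 ^ 2 ^ k) ^ 2 := by ring
      _ ≤ (a 0 ^ 2 ^ k * a (2 ^ k)) ^ 2 := pow_le_pow_left₀ (by positivity) ih 2
      _ = a 0 ^ (2 * 2 ^ k) * a (2 ^ k) ^ 2 := by ring
      _ ≤ a 0 ^ (2 * 2 ^ k) * (a 0 * a (2 * 2 ^ k)) := by gcongr; exact hsq _
      _ = a 0 * (a 0 ^ (2 * 2 ^ k) * a (2 * 2 ^ k)) := by ring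

lemma le_mul_of_sq_le_mul_of_le_geom {a : ℕ → ℝ} {κ C : ℝ} (hκ : 0 ≤ κ) (ha₀ : 0 ≤ a 0)
    (hsq : ∀ m, a m ^ 2 ≤ a 0 * a (2 * m)) (hC : ∀ m, a m ≤ C * κ ^ m) : a 1 ≤ κ * a 0 := by
  by_contra! hlt
  have ha₁ : 0 < a 1 := (mul_nonneg hκ ha₀).trans_lt hlt
  have ha₀' : 0 < a 0 := by
    refine ha₀.lt_of_ne fun h0 => (pow_pos ha₁ 2).not_ge ?_
    simpa [← h0] using hsq 1
  set r := κ * a 0 / a 1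
  have hr₀ : 0 ≤ r := by positivity
  have hr₁ : r < 1 := (div_lt_one ha₁).2 hlt
  have hbound : ∀ k, a 0 ≤ C * r ^ 2 ^ k := by
    intro k
    rw [← mul_le_mul_iff_of_pos_right (pow_pos ha₁ (2 ^ k))]
    calc a 0 * a 1 ^ 2 ^ k ≤ a 0 ^ 2 ^ k * (C * κ ^ 2 ^ k) :=
          (mul_pow_two_pow_le_of_sq_le ha₀' ha₁.le hsq k).trans
            (mul_le_mul_of_nonneg_left (hC _) (by positivity))
      _ = C * r ^ 2 ^ k * a 1 ^ 2 ^ k := by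
          rw [div_pow, mul_assoc C, div_mul_cancel₀ _ (pow_pos ha₁ _).ne']
          ring
  have hC₀ : 0 < C := by
    by_contra! hC
    have h₀ := hbound 0
    rw [pow_zero, pow_one] at h₀
    nlinarith
  obtain ⟨k, hk⟩ := exists_pow_lt_of_lt_one (div_pos ha₀' hC₀) hr₁
  have hmono : r ^ 2 ^ k ≤ r ^ k := pow_le_pow_of_le_one hr₀ hr₁.le Nat.lt_two_pow_self.le
  rw [lt_div_iff₀ hC₀] at hk
  nlinarith [hbound k]

theorem IsReversible.wInner_mulVec_le_of_hasContractiveCoupling {α : Type*} [Fintype α]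
    [DecidableEq α] {μ : α → ℝ} {K : Matrix α α ℝ} {d : α → α → ℝ} {κ : ℝ}
    (hK : IsReversible μ K) (hμ : ∀ x, 0 < μ x) (hc : HasContractiveCoupling K d κ)
    (hd0 : ∀ x, d x x = 0) (hdpos : ∀ x y, x ≠ y → 0 < d x y) {h : α → ℝ}
    (hmean : ∑ x, μ x * h x = 0) :
    wInner μ h (K *ᵥ h) ≤ κ * wInner μ h h := by
  by_cases hκ : 0 ≤ κ
  · obtain ⟨C, hC⟩ := hc.exists_wInner_pow_mulVec_le hκ hd0 hdpos hmean
    simpa using le_mul_of_sq_le_mul_of_le_geom (a := fun m => wInner μ h (K ^ m *ᵥ h)) hκ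
      (by simpa using wInner_self_nonneg (fun x => (hμ x).le) h)
      (by simpa using hK.wInner_pow_mulVec_sq_le (fun x => (hμ x).le) h) hC
  -- a negative rate is only possible on a subsingleton, where a centred `h` vanishes
  have hd : ∀ x y, 0 ≤ d x y := fun x y => by
    rcases eq_or_ne x y with rfl | hxy
    exacts [(hd0 x).ge, (hdpos x y hxy).le]
  have hsub : ∀ x y : α, x = y := fun x y =>
    by_contra fun hxy => hκ (hc.rate_nonneg hd (hdpos x y hxy))
  have hh : h = 0 := funext fun x => by
    rw [sum_eq_single x (fun y _ hy => (hy (hsub y x)).elim) (by simp)] at hmean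
    exact (mul_eq_zero.1 hmean).resolve_left (hμ x).ne'
  simp [hh]

section ConditionalExpectation

variable {α β : Type*} [Fintype α] [DecidableEq β] {φ : α → β} {μ : α → ℝ}

/-- The kernel of the conditional expectation `E_μ[· | φ]`: resample within the fibre of `φ`. -/
def condKernel (φ : α → β) (μ : α → ℝ) : Matrix α α ℝ := fun x y =>
  if φ y = φ x then μ y / ∑ z, (if φ z = φ x then μ z else 0) else 0

lemma condKernel_congr_left {x x' : α} (hx : φ x = φ x') (y : α) :
    condKernel φ μ x y = condKernel φ μ x' y := by
  simp only [condKernel, hx]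

lemma isReversible_condKernel : IsReversible μ (condKernel φ μ) := by
  intro x y
  by_cases hxy : φ y = φ x
  · simp only [condKernel, hxy, if_true]
    ring
  · simp only [condKernel, if_neg hxy, if_neg (Ne.symm hxy), mul_zero]

lemma sum_condKernel (hμ : ∀ x, 0 < μ x) (x : α) : ∑ y, condKernel φ μ x y = 1 := by
  have hZ : 0 < ∑ z, (if φ z = φ x then μ z else 0) :=
    sum_pos' (fun z _ => by split_ifs; exacts [(hμ z).le, le_rfl]) ⟨x, mem_univ x, by simp [hμ x]⟩
  rw [← div_self hZ.ne', sum_div]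
  refine sum_congr rfl fun y _ => ?_
  simp only [condKernel]
  split_ifs <;> simp

lemma condKernel_mulVec_of_congr (hμ : ∀ x, 0 < μ x) {r : α → ℝ}
    (hr : ∀ x y, φ x = φ y → r x = r y) : condKernel φ μ *ᵥ r = r := by
  funext x
  calc (condKernel φ μ *ᵥ r) x = ∑ y, condKernel φ μ x y * r x := by
        refine sum_congr rfl fun y _ => ?_
        simp only [condKernel]
        split_ifs with hyx
        · rw [hr y x hyx]
        · simp
    _ = r x := by rw [← sum_mul, sum_condKernel hμ, one_mul]

lemma condKernel_mulVec_congr {x x' : α} (hx : φ x = φ x') (h : α → ℝ) :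
    (condKernel φ μ *ᵥ h) x = (condKernel φ μ *ᵥ h) x' := by
  simp only [Matrix.mulVec, dotProduct, condKernel_congr_left hx]

lemma condKernel_mulVec_mulVec_self (hμ : ∀ x, 0 < μ x) (h : α → ℝ) :
    condKernel φ μ *ᵥ (condKernel φ μ *ᵥ h) = condKernel φ μ *ᵥ h :=
  condKernel_mulVec_of_congr hμ fun _ _ hx => condKernel_mulVec_congr hx h

lemma wInner_condKernel_mulVec_self (hμ : ∀ x, 0 < μ x) (g : α → ℝ) :
    wInner μ g (condKernel φ μ *ᵥ g) = wInner μ (condKernel φ μ *ᵥ g) (condKernel φ μ *ᵥ g) := by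
  conv_lhs => rw [← condKernel_mulVec_mulVec_self hμ g]
  exact isReversible_condKernel.wInner_mulVec g _

lemma wInner_sub_wInner_condKernel_le (hμ : ∀ x, 0 < μ x) {g h : α → ℝ}
    (hgh : ∀ x y, φ x = φ y → h x - g x = h y - g y) :
    wInner μ h h - wInner μ h (condKernel φ μ *ᵥ h) ≤ wInner μ g g := by
  set P := condKernel φ μ
  have hr : P *ᵥ (h - g) = h - g := condKernel_mulVec_of_congr hμ hgh
  have hcross : wInner μ (h - g) (P *ᵥ g) = wInner μ (h - g) g := by
    rw [isReversible_condKernel.wInner_mulVec, hr]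
  calc wInner μ h h - wInner μ h (P *ᵥ h) = wInner μ (g + (h - g)) (g - P *ᵥ g) := by
        rw [← map_sub, add_sub_cancel]
        congr 1
        rw [← sub_add_cancel h g, Matrix.mulVec_add, hr]
        abel
    _ = wInner μ g g - wInner μ (P *ᵥ g) (P *ᵥ g) := by
        rw [LinearMap.map_add₂, map_sub, map_sub, hcross, sub_self, add_zero,
          wInner_condKernel_mulVec_self hμ]
    _ ≤ wInner μ g g := sub_le_self _ (wInner_self_nonneg (fun x => (hμ x).le) _)

end ConditionalExpectation

section Glauber

def restrictOff (i : Fin n) (x : ∀ j, Ω j) : ∀ j : {j // j ≠ i}, Ω j := fun j => x j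

lemma restrictOff_eq_restrictOff_iff {i : Fin n} {x y : ∀ j, Ω j} :
    restrictOff i y = restrictOff i x ↔ ∀ j, j ≠ i → y j = x j := by
  simp [restrictOff, funext_iff]

def coordSum (v : (Σ i, Ω i) → ℝ) (x : ∀ i, Ω i) : ℝ := ∑ i, v ⟨i, x i⟩

lemma coordSum_sub_eq_of_restrictOff_eq (v : (Σ i, Ω i) → ℝ) {i : Fin n} {x y : ∀ i, Ω i}
    (hxy : restrictOff i x = restrictOff i y) :
    coordSum v x - v ⟨i, x i⟩ = coordSum v y - v ⟨i, y i⟩ := by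
  simp only [coordSum, ← add_sum_erase _ _ (mem_univ i), add_sub_cancel_left]
  exact sum_congr rfl fun j hj =>
    by rw [restrictOff_eq_restrictOff_iff.1 hxy j (ne_of_mem_erase hj)]

variable [∀ i, Fintype (Ω i)] [∀ i, DecidableEq (Ω i)]

lemma sum_ite_restrictOff_eq (F : (∀ j, Ω j) → ℝ) (i : Fin n) (x : ∀ j, Ω j) :
    (∑ y, if restrictOff i y = restrictOff i x then F y else 0) =
      ∑ a, F (Function.update x i a) := by
  have hfiber : ∀ y, restrictOff i y = restrictOff i x → Function.update x i (y i) = y :=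
    fun y hy => Function.update_eq_iff.2
      ⟨rfl, fun j hj => (restrictOff_eq_restrictOff_iff.1 hy j hj).symm⟩
  rw [← sum_filter]
  refine sum_nbij' (fun y => y i) (Function.update x i) (fun _ _ => mem_univ _)
    (fun a _ => ?_) (fun y hy => hfiber y (mem_filter.1 hy).2) (fun a _ => by simp)
    (fun y hy => by rw [hfiber y (mem_filter.1 hy).2])
  simpa [restrictOff_eq_restrictOff_iff] using fun j hj => Function.update_of_ne hj a x

lemma glauber_eq_smul_sum_condKernel (μ : (∀ i, Ω i) → ℝ) :
    (glauber μ : Matrix (∀ i, Ω i) (∀ i, Ω i) ℝ) =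
      (1 / (n : ℝ)) • ∑ i, condKernel (restrictOff i) μ := by
  ext x y
  simp only [glauber, Matrix.smul_apply, Matrix.sum_apply, smul_eq_mul, condKernel,
    sum_ite_restrictOff_eq μ]
  simp only [restrictOff_eq_restrictOff_iff]

lemma isReversible_glauber (μ : (∀ i, Ω i) → ℝ) : IsReversible μ (glauber μ) := fun x y => by
  simp only [glauber_eq_smul_sum_condKernel, Matrix.smul_apply, Matrix.sum_apply, smul_eq_mul,
    mul_left_comm (μ _), mul_sum, isReversible_condKernel x y]

lemma wInner_sub_wInner_glauber_mulVec_le (hn : 1 ≤ n) {μ : (∀ i, Ω i) → ℝ}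
    (hμ : ∀ x, 0 < μ x) {h : (∀ i, Ω i) → ℝ} {g : Fin n → (∀ i, Ω i) → ℝ}
    (hg : ∀ i x y, restrictOff i x = restrictOff i y → h x - g i x = h y - g i y) :
    wInner μ h h - wInner μ h (glauber μ *ᵥ h) ≤ 1 / (n : ℝ) * ∑ i, wInner μ (g i) (g i) := by
  have hn' : (n : ℝ) ≠ 0 := by positivity
  calc wInner μ h h - wInner μ h (glauber μ *ᵥ h)
      = 1 / (n : ℝ) * ∑ i, (wInner μ h h - wInner μ h (condKernel (restrictOff i) μ *ᵥ h)) := by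
        rw [glauber_eq_smul_sum_condKernel, Matrix.smul_mulVec, Matrix.sum_mulVec, map_smul,
          map_sum, sum_sub_distrib, sum_const, card_univ, Fintype.card_fin, nsmul_eq_mul,
          smul_eq_mul]
        field_simp
    _ ≤ 1 / (n : ℝ) * ∑ i, wInner μ (g i) (g i) :=
        mul_le_mul_of_nonneg_left (sum_le_sum fun i _ => wInner_sub_wInner_condKernel_le hμ (hg i))
          (by positivity)

end Glauber

section CorrelationMatrix

variable [∀ i, Fintype (Ω i)] [∀ i, DecidableEq (Ω i)] {μ : (∀ i, Ω i) → ℝ}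

lemma sum_ite_eq_sum_coord (F : (Σ i, Ω i) → ℝ) (x : ∀ i, Ω i) :
    (∑ u : Σ i, Ω i, if x u.1 = u.2 then F u else 0) = ∑ i, F ⟨i, x i⟩ := by
  rw [← univ_sigma_univ, sum_sigma]
  exact sum_congr rfl fun i _ => by simp

lemma sum_marg_mul (μ : (∀ i, Ω i) → ℝ) (G : (Σ i, Ω i) → ℝ) :
    ∑ u, marg μ u * G u = ∑ x, μ x * ∑ i, G ⟨i, x i⟩ := by
  simp only [marg, sum_mul, ite_mul, zero_mul]
  rw [sum_comm]
  exact sum_congr rfl fun x _ => by rw [sum_ite_eq_sum_coord (fun u => μ x * G u), mul_sum]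

lemma sum_pairMarg_mul_mul (μ : (∀ i, Ω i) → ℝ) (v : (Σ i, Ω i) → ℝ) :
    ∑ u, ∑ w, pairMarg μ u w * (v u * v w) = ∑ x, μ x * coordSum v x ^ 2 := by
  have hterm : ∀ u w, pairMarg μ u w * (v u * v w) = ∑ x, μ x *
      ((if x u.1 = u.2 then v u else 0) * (if x w.1 = w.2 then v w else 0)) := fun u w => by
    simp only [pairMarg, sum_mul]
    exact sum_congr rfl fun x _ => by split_ifs <;> simp_all
  simp only [hterm]
  rw [sum_congr rfl fun u _ => sum_comm, sum_comm]
  refine sum_congr rfl fun x _ => ?_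
  rw [sq, coordSum, ← sum_ite_eq_sum_coord, sum_mul_sum, mul_sum]
  exact sum_congr rfl fun u _ => by rw [mul_sum]

variable [∀ i, Nonempty (Ω i)]

lemma marg_pos (hμ : ∀ x, 0 < μ x) (u : Σ i, Ω i) : 0 < marg μ u := by
  refine sum_pos' (fun x _ => by split_ifs; exacts [(hμ x).le, le_rfl]) ?_
  exact ⟨Function.update (Classical.arbitrary _) u.1 u.2, mem_univ _, by simp [hμ]⟩

lemma sum_marg_mul_sq_pos (hμ : ∀ x, 0 < μ x) {v : (Σ i, Ω i) → ℝ} (hv : v ≠ 0) :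
    0 < ∑ u, marg μ u * v u ^ 2 := by
  obtain ⟨u₀, hu₀⟩ := Function.ne_iff.1 hv
  exact sum_pos' (fun u _ => mul_nonneg (marg_pos hμ u).le (sq_nonneg _))
    ⟨u₀, mem_univ _, mul_pos (marg_pos hμ u₀) (pow_two_pos_of_ne_zero hu₀)⟩

lemma marg_mul_corrMatrixProd (hμ : ∀ x, 0 < μ x) (u w : Σ i, Ω i) :
    marg μ u * corrMatrixProd μ u w = pairMarg μ u w - marg μ u * marg μ w := by
  have hu := (marg_pos hμ u).ne'
  rcases eq_or_ne u w with rfl | huw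
  · simp only [corrMatrixProd, if_true, pairMarg, marg, and_self]
    ring
  · simp only [corrMatrixProd, if_neg huw]
    field_simp

lemma sum_marg_mul_mulVec_corrMatrixProd (hμ : ∀ x, 0 < μ x) (v : (Σ i, Ω i) → ℝ) :
    ∑ u, marg μ u * v u * (corrMatrixProd μ *ᵥ v) u =
      ∑ x, μ x * coordSum v x ^ 2 - (∑ x, μ x * coordSum v x) ^ 2 := by
  have hmean : ∑ u, marg μ u * v u = ∑ x, μ x * coordSum v x := sum_marg_mul μ v
  calc ∑ u, marg μ u * v u * (corrMatrixProd μ *ᵥ v) u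
      = ∑ u, ∑ w, (pairMarg μ u w - marg μ u * marg μ w) * (v u * v w) := by
        refine sum_congr rfl fun u _ => ?_
        simp only [Matrix.mulVec, dotProduct, mul_sum, ← marg_mul_corrMatrixProd hμ]
        exact sum_congr rfl fun w _ => by ring
    _ = ∑ x, μ x * coordSum v x ^ 2 - (∑ x, μ x * coordSum v x) ^ 2 := by
        simp only [sub_mul, sum_sub_distrib, sum_pairMarg_mul_mul, ← hmean, sq, sum_mul_sum]
        congr 1
        exact sum_congr rfl fun u _ => sum_congr rfl fun w _ => by ring

end CorrelationMatrix

lemma mul_wInner_center_coordSum_le [∀ i, Fintype (Ω i)] [∀ i, DecidableEq (Ω i)]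
    {μ : (∀ i, Ω i) → ℝ} {d : (∀ i, Ω i) → (∀ i, Ω i) → ℝ} {κ ε : ℝ}
    (hn : 1 ≤ n) (hκ : κ ≤ 1 - ε / n) (hμ : ∀ x, 0 < μ x) (hμsum : ∑ x, μ x = 1)
    (hd0 : ∀ x, d x x = 0) (hdpos : ∀ x y, x ≠ y → 0 < d x y)
    (hc : HasContractiveCoupling (glauber μ) d κ) (v : (Σ i, Ω i) → ℝ) :
    ε * wInner μ (center μ (coordSum v)) (center μ (coordSum v)) ≤
      ∑ u, marg μ u * v u ^ 2 := by
  set h := center μ (coordSum v)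
  have hgap : wInner μ h (glauber μ *ᵥ h) ≤ κ * wInner μ h h :=
    (isReversible_glauber μ).wInner_mulVec_le_of_hasContractiveCoupling hμ hc hd0 hdpos
      (sum_mul_center hμsum _)
  have hdirichlet : wInner μ h h - wInner μ h (glauber μ *ᵥ h) ≤
      1 / (n : ℝ) * ∑ u, marg μ u * v u ^ 2 := by
    have hsplit : ∀ i x y, restrictOff i x = restrictOff i y →
        h x - v ⟨i, x i⟩ = h y - v ⟨i, y i⟩ := fun i x y hxy => by
      simp only [h, center, sub_right_comm _ _ (v _), coordSum_sub_eq_of_restrictOff_eq v hxy]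
    refine (wInner_sub_wInner_glauber_mulVec_le hn hμ hsplit).trans_eq ?_
    rw [sum_marg_mul]
    congr 1
    simp only [wInner_apply, mul_sum, sq]
    exact sum_comm
  have hvar : 0 ≤ wInner μ h h := wInner_self_nonneg (fun x => (hμ x).le) h
  have hn' : (0 : ℝ) < n := by exact_mod_cast hn
  have hscaled : ε / n * wInner μ h h ≤ 1 / n * ∑ u, marg μ u * v u ^ 2 := by nlinarith
  rwa [div_mul_eq_mul_div, one_div_mul_eq_div, div_le_div_iff_of_pos_right hn'] at hscaled

theorem contractive_coupling_implies_spectral_independence_general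
    [∀ i, Fintype (Ω i)] [∀ i, DecidableEq (Ω i)] [∀ i, Nonempty (Ω i)]
    (μ : (∀ i, Ω i) → ℝ) (d : (∀ i, Ω i) → (∀ i, Ω i) → ℝ) (κ ε : ℝ)
    (hn : 1 ≤ n) (hε : 0 < ε) (hκ : κ ≤ 1 - ε / n)
    (hμpos : ∀ x, 0 < μ x) (hμsum : ∑ x, μ x = 1)
    (hd0 : ∀ x, d x x = 0) (hdpos : ∀ x y, x ≠ y → 0 < d x y)
    (hcoupling : ∀ x y : ∀ i, Ω i,
      ∃ π : (∀ i, Ω i) × (∀ i, Ω i) → ℝ,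
        (∀ z, 0 ≤ π z) ∧
        (∀ a, ∑ b, π (a, b) = glauber μ x a) ∧
        (∀ b, ∑ a, π (a, b) = glauber μ y b) ∧
        (∑ z : (∀ i, Ω i) × (∀ i, Ω i), π z * d z.1 z.2) ≤ κ * d x y) :
    ∀ t : ℝ, Module.End.HasEigenvalue (Matrix.toLin' (corrMatrixProd μ)) t → t ≤ 1 / ε := by
  intro t ht
  obtain ⟨v, hv⟩ := ht.exists_hasEigenvector
  have hΨv : corrMatrixProd μ *ᵥ v = t • v := by
    simpa [Matrix.toLin'_apply] using hv.apply_eq_smul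
  have hvar : wInner μ (center μ (coordSum v)) (center μ (coordSum v)) =
      t * ∑ u, marg μ u * v u ^ 2 := by
    rw [wInner_center_self hμsum, ← sum_marg_mul_mulVec_corrMatrixProd hμpos, hΨv, mul_sum]
    exact sum_congr rfl fun u _ => by simp only [Pi.smul_apply, smul_eq_mul]; ring
  have hpoincare := mul_wInner_center_coordSum_le hn hκ hμpos hμsum hd0 hdpos hcoupling v
  rw [hvar] at hpoincare
  rw [le_div_iff₀ hε]
  nlinarith [sum_marg_mul_sq_pos hμpos hv.2]

/-- If the Glauber dynamics of `μ` on a finite product space admits, for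
every pair of states, a one-step coupling contracting a metric `d` by a factor
`κ ≤ 1 − ε/n`, then `μ` is `(1/ε)`-spectrally independent. -/
theorem contractive_coupling_implies_spectral_independence
    [∀ i, Fintype (Ω i)] [∀ i, DecidableEq (Ω i)] [∀ i, Nonempty (Ω i)]
    (μ : (∀ i, Ω i) → ℝ) (d : (∀ i, Ω i) → (∀ i, Ω i) → ℝ) (κ ε : ℝ)
    (hn : 1 ≤ n) (hε : 0 < ε) (hκ : κ ≤ 1 - ε / n)
    (hμpos : ∀ x, 0 < μ x) (hμsum : ∑ x, μ x = 1)
    (hd0 : ∀ x, d x x = 0) (hdpos : ∀ x y, x ≠ y → 0 < d x y)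
    (hdsymm : ∀ x y, d x y = d y x)
    (hdtri : ∀ x y z, d x z ≤ d x y + d y z)
    (hcoupling : ∀ x y : ∀ i, Ω i,
      ∃ π : (∀ i, Ω i) × (∀ i, Ω i) → ℝ,
        (∀ z, 0 ≤ π z) ∧
        (∀ a, ∑ b, π (a, b) = glauber μ x a) ∧
        (∀ b, ∑ a, π (a, b) = glauber μ y b) ∧
        (∑ z : (∀ i, Ω i) × (∀ i, Ω i), π z * d z.1 z.2) ≤ κ * d x y) :
    ∀ t : ℝ, Module.End.HasEigenvalue (Matrix.toLin' (corrMatrixProd μ)) t → t ≤ 1 / ε :=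
  contractive_coupling_implies_spectral_independence_general μ d κ ε hn hε hκ hμpos hμsum hd0 hdpos
    hcoupling
end
end

section
/- Let μ be a distribution on binom([n],k) and v ∈ R^n, and define f(S) = Σ_{i∈S} v_i. Then E_{S_{k−1} ∼ μD_{k→k−1}}[Var(f(S) | S ⊇ S_{k−1})] ≤ (1/k)·E_{S∼μ}[Σ_{i∈S} v_i²]. -/
open Finset BigOperators

noncomputable section

/-- Total μ-mass of k-sets containing `T`. -/
def downMass {n : ℕ} (μ : Finset (Fin n) → ℝ) (k : ℕ) (T : Finset (Fin n)) : ℝ :=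
  ∑ S ∈ kSets n k, if T ⊆ S then μ S else 0

/-- Conditional expectation `E_μ[f(S) | T ⊆ S]`. -/
def condExp {n : ℕ} (μ : Finset (Fin n) → ℝ) (k : ℕ) (T : Finset (Fin n))
    (f : Finset (Fin n) → ℝ) : ℝ :=
  (∑ S ∈ kSets n k, if T ⊆ S then μ S * f S else 0) / downMass μ k T

/-- Conditional variance `Var_μ(f(S) | T ⊆ S)`. -/
def condVar {n : ℕ} (μ : Finset (Fin n) → ℝ) (k : ℕ) (T : Finset (Fin n))
    (f : Finset (Fin n) → ℝ) : ℝ :=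
  condExp μ k T (fun S => (f S) ^ 2) - (condExp μ k T f) ^ 2

/-- Variance bounded by second moment about any point `c`. -/
lemma downMass_mul_condVar_le {n : ℕ} (μ : Finset (Fin n) → ℝ) (k : ℕ) (T : Finset (Fin n))
    (f : Finset (Fin n) → ℝ) (c : ℝ) (hnonneg : ∀ S, 0 ≤ μ S) :
    downMass μ k T * condVar μ k T f ≤
      ∑ S ∈ kSets n k, if T ⊆ S then μ S * (f S - c) ^ 2 else 0 := by
  set w : Finset (Fin n) → ℝ := fun S => if T ⊆ S then μ S else 0 with hw
  have hwnn : ∀ S, 0 ≤ w S := fun S => by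
    simp only [hw]; split
    · exact hnonneg S
    · exact le_rfl
  set W := ∑ S ∈ kSets n k, w S with hWdef
  have hWnn : 0 ≤ W := sum_nonneg fun S _ => hwnn S
  set A := ∑ S ∈ kSets n k, w S * f S with hA
  set B := ∑ S ∈ kSets n k, w S * f S ^ 2 with hB
  set B' := ∑ S ∈ kSets n k, w S * (f S - c) ^ 2 with hB'def
  have hA' : (∑ S ∈ kSets n k, if T ⊆ S then μ S * f S else 0) = A := by
    refine sum_congr rfl fun S _ => ?_
    simp only [hw]; split <;> simp
  have hBeq : (∑ S ∈ kSets n k, if T ⊆ S then μ S * (f S) ^ 2 else 0) = B := by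
    refine sum_congr rfl fun S _ => ?_
    simp only [hw]; split <;> simp
  have hB'eq : (∑ S ∈ kSets n k, if T ⊆ S then μ S * (f S - c) ^ 2 else 0) = B' := by
    refine sum_congr rfl fun S _ => ?_
    simp only [hw]; split <;> simp
  have hDW : downMass μ k T = W := rfl
  have hB'id : B' = B - 2 * c * A + c ^ 2 * W := by
    rw [hB'def, hB, hA, hWdef, mul_sum, mul_sum, ← sum_sub_distrib, ← sum_add_distrib]
    exact sum_congr rfl fun S _ => by ring
  have hB'nn : 0 ≤ B' := sum_nonneg fun S _ => mul_nonneg (hwnn S) (sq_nonneg _)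
  rw [hB'eq, hDW, condVar, condExp, condExp, hDW, hA', hBeq]
  rcases eq_or_lt_of_le hWnn with hW0 | hWpos
  · rw [← hW0, zero_mul]; exact hB'nn
  · have hWne : W ≠ 0 := ne_of_gt hWpos
    have key : W * B - A ^ 2 ≤ W * B' := by nlinarith [sq_nonneg (A - c * W)]
    calc W * (B / W - (A / W) ^ 2) = (W * B - A ^ 2) / W := by field_simp
      _ ≤ (W * B') / W := by gcongr
      _ = B' := by field_simp

/-- Counting: `(k-1)`-subsets of a `k`-set correspond to erased elements. -/
lemma sum_over_subsets {n k : ℕ} (hk : 1 ≤ k) (S : Finset (Fin n)) (hS : S.card = k)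
    (q : Fin n → ℝ) :
    (∑ T ∈ kSets n (k - 1), if T ⊆ S then (∑ i ∈ S \ T, q i) else 0) = ∑ i ∈ S, q i := by
  have step : ∀ T ∈ kSets n (k - 1),
      (if T ⊆ S then (∑ i ∈ S \ T, q i) else 0)
        = ∑ i ∈ S, if T ⊆ S ∧ i ∉ T then q i else 0 := by
    intro T _
    split
    · next h =>
      rw [← sum_filter]
      congr 1
      ext i
      simp [mem_sdiff, mem_filter, h, and_comm]
    · next h => simp [h]
  rw [sum_congr rfl step, sum_comm]
  refine sum_congr rfl fun i hi => ?_
  have hmem : S.erase i ∈ kSets n (k - 1) := by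
    simp only [kSets, mem_powersetCard_univ, card_erase_of_mem hi, hS]
  have h0 : ∀ T ∈ kSets n (k - 1), T ≠ S.erase i →
      (if T ⊆ S ∧ i ∉ T then q i else 0) = 0 := by
    intro T hT hTne
    rw [if_neg]
    rintro ⟨hTS, hiT⟩
    apply hTne
    apply eq_of_subset_of_card_le (subset_erase.mpr ⟨hTS, hiT⟩)
    rw [card_erase_of_mem hi, hS]
    have : T.card = k - 1 := by simpa [kSets, mem_powersetCard_univ] using hT
    omega
  rw [Finset.sum_eq_single_of_mem (S.erase i) hmem h0,
    if_pos ⟨erase_subset i S, notMem_erase i S⟩]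

/-- For `μ` on k-subsets of `[n]`, `v ∈ ℝⁿ` and `f(S) = Σ_{i∈S} v_i`,
`E_{S_{k−1} ∼ μ D_{k→k−1}}[Var(f(S) | S ⊇ S_{k−1})] ≤ (1/k) E_{S∼μ}[Σ_{i∈S} v_i²]`. -/
theorem expected_conditional_variance_le
    (n k : ℕ) (μ : Finset (Fin n) → ℝ) (v : Fin n → ℝ)
    (hk : 1 ≤ k)
    (hnonneg : ∀ S, 0 ≤ μ S)
    (hsum : ∑ S ∈ kSets n k, μ S = 1) :
    ∑ T ∈ kSets n (k - 1),
        ((1 / (k : ℝ)) * downMass μ k T) * condVar μ k T (fun S => ∑ i ∈ S, v i) ≤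
      (1 / (k : ℝ)) * ∑ S ∈ kSets n k, μ S * ∑ i ∈ S, (v i) ^ 2 := by
  have hk0 : (0:ℝ) ≤ 1 / (k:ℝ) := by positivity
  have main : ∑ T ∈ kSets n (k - 1), downMass μ k T * condVar μ k T (fun S => ∑ i ∈ S, v i)
      ≤ ∑ S ∈ kSets n k, μ S * ∑ i ∈ S, (v i) ^ 2 := by
    calc ∑ T ∈ kSets n (k - 1), downMass μ k T * condVar μ k T (fun S => ∑ i ∈ S, v i)
        ≤ ∑ T ∈ kSets n (k - 1), ∑ S ∈ kSets n k,
            if T ⊆ S then μ S * (∑ i ∈ S \ T, (v i) ^ 2) else 0 := by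
          refine sum_le_sum fun T hT => ?_
          refine le_trans (downMass_mul_condVar_le μ k T _ (∑ i ∈ T, v i) hnonneg) ?_
          refine sum_le_sum fun S hS => ?_
          split
          · next h =>
            have hSc : S.card = k := by simpa [kSets, mem_powersetCard_univ] using hS
            have hTc : T.card = k - 1 := by simpa [kSets, mem_powersetCard_univ] using hT
            have hcard : (S \ T).card = 1 := by rw [card_sdiff_of_subset h, hSc, hTc]; omega
            have hdiff : (∑ i ∈ S, v i) - ∑ i ∈ T, v i = ∑ i ∈ S \ T, v i := by
              rw [← sum_sdiff h]; ring
            refine mul_le_mul_of_nonneg_left ?_ (hnonneg S)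
            simp only [hdiff]
            calc (∑ i ∈ S \ T, v i) ^ 2 ≤ ((S \ T).card : ℝ) * ∑ i ∈ S \ T, (v i) ^ 2 :=
                  sq_sum_le_card_mul_sum_sq
              _ = ∑ i ∈ S \ T, (v i) ^ 2 := by rw [hcard]; norm_num
          · exact le_rfl
      _ = ∑ S ∈ kSets n k, μ S * ∑ i ∈ S, (v i) ^ 2 := by
          rw [sum_comm]
          refine sum_congr rfl fun S hS => ?_
          have hSc : S.card = k := by simpa [kSets, mem_powersetCard_univ] using hS
          rw [← sum_over_subsets hk S hSc (fun i => (v i) ^ 2), mul_sum]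
          refine sum_congr rfl fun T _ => ?_
          split <;> simp
  calc ∑ T ∈ kSets n (k - 1),
        ((1 / (k : ℝ)) * downMass μ k T) * condVar μ k T (fun S => ∑ i ∈ S, v i)
      = (1 / (k:ℝ)) * ∑ T ∈ kSets n (k - 1),
          downMass μ k T * condVar μ k T (fun S => ∑ i ∈ S, v i) := by
        rw [mul_sum]; exact sum_congr rfl fun T _ => by ring
    _ ≤ _ := mul_le_mul_of_nonneg_left main hk0

end
end
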